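/- arXiv:1706.08672 — 7 statements merged into one kernel-verified Lean document; each statement's English description precedes it below -/
import Mathlib

section
/- Let M be a real matrix, v ∈ ℝⁿ, and ε > 0 with ‖M - v vᵀ‖ ≤ ‖M‖ - ε‖v‖², where ‖·‖ denotes the spectral norm. Then if u and w are top unit left- and right-singular vectors of M (so |uᵀ M w| = ‖M‖), either ⟨u, v⟩² ≥ ε‖v‖² or ⟨w, v⟩² ≥ ε‖v‖². -/
open Matrix
open scoped Kronecker

noncomputable def specNorm {m n : Type*} [Fintype m] [Fintype n] [DecidableEq n]
    (M : Matrix m n ℝ) : ℝ :=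
  ‖LinearMap.toContinuousLinearMap (Matrix.toEuclideanLin M)‖

noncomputable def frobNorm {m n : Type*} [Fintype m] [Fintype n]
    (M : Matrix m n ℝ) : ℝ :=
  Real.sqrt (∑ i, ∑ j, (M i j) ^ 2)

/-! Evaluating the bilinear form of `M - v vᵀ` at the top singular pair `(u, w)` gives
`‖M‖ - |⟨u, v⟩ ⟨w, v⟩| ≤ ‖M - v vᵀ‖ ≤ ‖M‖ - ε ‖v‖²`, so `ε ‖v‖² ≤ |⟨u, v⟩| |⟨w, v⟩|`, which is at
most the larger of `⟨u, v⟩²` and `⟨w, v⟩²`. -/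

lemma norm_toLp_two_eq_sqrt_sum_sq {n : Type*} [Fintype n] (x : n → ℝ) :
    ‖WithLp.toLp 2 x‖ = √(∑ i, x i ^ 2) := by
  simp [EuclideanSpace.norm_eq]

lemma abs_dotProduct_mulVec_le_specNorm {m n : Type*} [Fintype m] [Fintype n] [DecidableEq n]
    (A : Matrix m n ℝ) (u : m → ℝ) (w : n → ℝ) :
    |u ⬝ᵥ A *ᵥ w| ≤ specNorm A * √(∑ i, u i ^ 2) * √(∑ j, w j ^ 2) := by
  set T := LinearMap.toContinuousLinearMap (Matrix.toEuclideanLin A)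
  have hinner : u ⬝ᵥ A *ᵥ w = inner ℝ (WithLp.toLp 2 u) (T (WithLp.toLp 2 w)) := by
    rw [dotProduct_comm]
    rfl
  rw [hinner, ← norm_toLp_two_eq_sqrt_sum_sq, ← norm_toLp_two_eq_sqrt_sum_sq, mul_right_comm]
  calc |inner ℝ (WithLp.toLp 2 u) (T (WithLp.toLp 2 w))|
      ≤ ‖WithLp.toLp 2 u‖ * ‖T (WithLp.toLp 2 w)‖ := abs_real_inner_le_norm _ _
    _ ≤ ‖WithLp.toLp 2 u‖ * (‖T‖ * ‖WithLp.toLp 2 w‖) := by gcongr; exact T.le_opNorm _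
    _ = ‖T‖ * ‖WithLp.toLp 2 w‖ * ‖WithLp.toLp 2 u‖ := by ring

lemma dotProduct_vecMulVec_mulVec {m n α : Type*} [Fintype m] [Fintype n] [CommSemiring α]
    (u x : m → α) (y w : n → α) :
    u ⬝ᵥ vecMulVec x y *ᵥ w = (u ⬝ᵥ x) * (y ⬝ᵥ w) := by
  rw [vecMulVec_mulVec, op_smul_eq_smul, dotProduct_smul, smul_eq_mul, mul_comm]

lemma le_sq_or_le_sq_of_le_abs_mul {α : Type*} [Ring α] [LinearOrder α] [IsStrictOrderedRing α]
    {c a b : α} (h : c ≤ |a| * |b|) : c ≤ a ^ 2 ∨ c ≤ b ^ 2 := by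
  rcases le_total |a| |b| with hab | hba
  · exact .inr <| h.trans <| (mul_le_mul_of_nonneg_right hab (abs_nonneg b)).trans_eq
      (by rw [← sq, sq_abs])
  · exact .inl <| h.trans <| (mul_le_mul_of_nonneg_left hba (abs_nonneg a)).trans_eq
      (by rw [← sq, sq_abs])

theorem top_singular_correlation_general {n : ℕ} (M : Matrix (Fin n) (Fin n) ℝ)
    (v u w : Fin n → ℝ) (ε : ℝ)
    (hM : specNorm (M - Matrix.vecMulVec v v) ≤ specNorm M - ε * ∑ i, v i ^ 2)
    (hu : ∑ i, u i ^ 2 = 1) (hw : ∑ i, w i ^ 2 = 1)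
    (htop : |u ⬝ᵥ M.mulVec w| = specNorm M) :
    ε * (∑ i, v i ^ 2) ≤ (∑ i, u i * v i) ^ 2 ∨
      ε * (∑ i, v i ^ 2) ≤ (∑ i, w i * v i) ^ 2 := by
  have hsplit : u ⬝ᵥ (M - vecMulVec v v) *ᵥ w = u ⬝ᵥ M *ᵥ w - (u ⬝ᵥ v) * (w ⬝ᵥ v) := by
    rw [sub_mulVec, dotProduct_sub, dotProduct_vecMulVec_mulVec, dotProduct_comm v w]
  have hdeflated : |u ⬝ᵥ M *ᵥ w - (u ⬝ᵥ v) * (w ⬝ᵥ v)| ≤ specNorm M - ε * ∑ i, v i ^ 2 := by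
    have := abs_dotProduct_mulVec_le_specNorm (M - vecMulVec v v) u w
    rw [hu, hw, Real.sqrt_one, mul_one, mul_one, hsplit] at this
    exact this.trans hM
  have hcorr : ε * ∑ i, v i ^ 2 ≤ |u ⬝ᵥ v| * |w ⬝ᵥ v| := by
    have := abs_sub_abs_le_abs_sub (u ⬝ᵥ M *ᵥ w) (u ⬝ᵥ M *ᵥ w - (u ⬝ᵥ v) * (w ⬝ᵥ v))
    rw [sub_sub_cancel, abs_mul, htop] at this
    linarith
  exact le_sq_or_le_sq_of_le_abs_mul hcorr

/-- If subtracting `v vᵀ` decreases the spectral norm of `M` by `ε ‖v‖²`, then a top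
singular pair of `M` correlates with `v`. -/
theorem top_singular_correlation {n : ℕ} (M : Matrix (Fin n) (Fin n) ℝ)
    (v u w : Fin n → ℝ) (ε : ℝ) (hε : 0 < ε)
    (hM : specNorm (M - Matrix.vecMulVec v v) ≤ specNorm M - ε * ∑ i, v i ^ 2)
    (hu : ∑ i, u i ^ 2 = 1) (hw : ∑ i, w i ^ 2 = 1)
    (htop : |u ⬝ᵥ M.mulVec w| = specNorm M) :
    ε * (∑ i, v i ^ 2) ≤ (∑ i, u i * v i) ^ 2 ∨
      ε * (∑ i, v i ^ 2) ≤ (∑ i, w i * v i) ^ 2 :=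
  top_singular_correlation_general M v u w ε hM hu hw htop
end

section
/- Let S and T be real symmetric d×d matrices with T = S + E where ‖E‖ ≤ ε (spectral norm), S positive semidefinite with rank(S) ≤ n. Let T' = (T - εI)₊ be the Frobenius projection of T - εI onto the PSD cone. Then rank(T') ≤ n, ‖T' - S‖ ≤ 2ε, and ‖T' - S‖_F ≤ 2ε√(2n). -/
/-!
Write `A = T - εI = ∑ μᵢ wᵢwᵢᵀ`, so that `T' = ∑ max(μᵢ, 0) wᵢwᵢᵀ = A₊`. Since
`S - A = εI - E`, the quadratic forms satisfy `A ≤ S ≤ A + 2εI`. Testing `S ≥ 0` against `wᵢ`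
gives `μᵢ ≥ -2ε`, hence `0 ≤ A₊ - A ≤ 2εI`, and together with `-2εI ≤ A - S ≤ 0` this gives
`-2εI ≤ T' - S ≤ 2εI`, i.e. `‖T' - S‖ ≤ 2ε`. On the span of the `wᵢ` with `μᵢ > 0`, which
contains the range of `T'`, the form of `S` dominates the positive definite form of `A`, so `S`
is injective there and `rank T' ≤ rank S`. Finally `T' - S` has rank at most `2n`, and a
symmetric matrix of rank `r` has `‖·‖_F ≤ √r ‖·‖`.
-/

open Matrix
open scoped Kronecker

namespace Matrix

variable {m n K : Type*} [Field K] [Fintype n]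

theorem rank_add_le (A B : Matrix m n K) : (A + B).rank ≤ A.rank + B.rank := by
  rw [rank, mulVecLin_add]
  exact (Submodule.finrank_mono (LinearMap.range_add_le _ _)).trans
    (Submodule.finrank_add_le_finrank_add_finrank _ _)

theorem rank_neg (A : Matrix m n K) : (-A).rank = A.rank := by
  have hneg : (-A).mulVecLin = -A.mulVecLin := by ext; simp
  rw [rank, rank, hneg, LinearMap.range_neg]

theorem rank_sub_le (A B : Matrix m n K) : (A - B).rank ≤ A.rank + B.rank := by
  simpa [sub_eq_add_neg, rank_neg] using rank_add_le A (-B)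

theorem finrank_le_rank_of_mulVec_injOn [Fintype m] {A : Matrix m n K}
    {V : Submodule K (n → K)} (hV : ∀ x ∈ V, A *ᵥ x = 0 → x = 0) :
    Module.finrank K V ≤ A.rank := by
  have hinj : Function.Injective (A.mulVecLin.domRestrict V) := by
    rw [← LinearMap.ker_eq_bot, LinearMap.ker_eq_bot']
    exact fun x hx => Subtype.ext (hV x x.2 hx)
  rw [← LinearMap.finrank_range_of_inj hinj]
  exact Submodule.finrank_mono (LinearMap.range_domRestrict_le_range _ _)

end Matrix

lemma specNorm_nonneg {m n : Type*} [Fintype m] [Fintype n] [DecidableEq n]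
    (M : Matrix m n ℝ) : 0 ≤ specNorm M :=
  norm_nonneg _

section Norms

variable {ι : Type*} [Fintype ι]

lemma norm_toLp_sq_eq_dotProduct_self (x : ι → ℝ) : ‖WithLp.toLp 2 x‖ ^ 2 = x ⬝ᵥ x := by
  rw [← real_inner_self_eq_norm_sq]; rfl

variable [DecidableEq ι]

lemma inner_toEuclideanLin_toLp (M : Matrix ι ι ℝ) (x : ι → ℝ) :
    inner ℝ (toEuclideanLin M (WithLp.toLp 2 x)) (WithLp.toLp 2 x) = x ⬝ᵥ (M *ᵥ x) :=
  rfl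

lemma abs_dotProduct_mulVec_le_of_specNorm_le {M : Matrix ι ι ℝ} {c : ℝ} (hM : specNorm M ≤ c)
    (x : ι → ℝ) : |x ⬝ᵥ (M *ᵥ x)| ≤ c * (x ⬝ᵥ x) := by
  rw [← inner_toEuclideanLin_toLp, ← norm_toLp_sq_eq_dotProduct_self, sq, ← mul_assoc]
  refine (abs_real_inner_le_norm _ _).trans <| mul_le_mul_of_nonneg_right ?_ (norm_nonneg _)
  exact ((LinearMap.toContinuousLinearMap (toEuclideanLin M)).le_opNorm _).trans
    (mul_le_mul_of_nonneg_right hM (norm_nonneg _))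

lemma specNorm_le_of_abs_dotProduct_mulVec_le {M : Matrix ι ι ℝ} (hM : M.IsHermitian) {c : ℝ}
    (hc : 0 ≤ c) (h : ∀ x, |x ⬝ᵥ (M *ᵥ x)| ≤ c * (x ⬝ᵥ x)) : specNorm M ≤ c := by
  refine (ContinuousLinearMap.norm_eq_iSup_rayleighQuotient _
    (isSymmetric_toEuclideanLin_iff.mpr hM)).trans_le (ciSup_le fun y => ?_)
  rw [ContinuousLinearMap.rayleighQuotient, ContinuousLinearMap.reApplyInnerSelf_apply,
    RCLike.re_to_real, abs_div, abs_sq]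
  refine div_le_of_le_mul₀ (sq_nonneg _) hc ?_
  simpa [← inner_toEuclideanLin_toLp, ← norm_toLp_sq_eq_dotProduct_self] using h (WithLp.ofLp y)

lemma abs_eigenvalues_le_specNorm {M : Matrix ι ι ℝ} (hM : M.IsHermitian) (i : ι) :
    |hM.eigenvalues i| ≤ specNorm M := by
  have hv : WithLp.ofLp (hM.eigenvectorBasis i) ⬝ᵥ WithLp.ofLp (hM.eigenvectorBasis i) = 1 := by
    rw [← norm_toLp_sq_eq_dotProduct_self]; simp [hM.eigenvectorBasis.orthonormal.1 i]
  simpa [hM.mulVec_eigenvectorBasis i, hv] using abs_dotProduct_mulVec_le_of_specNorm_le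
    (le_refl (specNorm M)) (WithLp.ofLp (hM.eigenvectorBasis i))

lemma sum_sq_eq_sum_eigenvalues_sq {M : Matrix ι ι ℝ} (hM : M.IsHermitian) :
    ∑ i, ∑ j, M i j ^ 2 = ∑ i, hM.eigenvalues i ^ 2 := by
  have hsq : ∑ i, ∑ j, M i j ^ 2 = (M * M).trace := by
    refine Finset.sum_congr rfl fun i _ => Finset.sum_congr rfl fun j _ => ?_
    change M i j ^ 2 = M i j * M j i
    rw [← hM.apply i j, star_trivial, sq]
  have hMM : M * M = Unitary.conjStarAlgAut ℝ _ hM.eigenvectorUnitary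
      (diagonal (RCLike.ofReal ∘ hM.eigenvalues) * diagonal (RCLike.ofReal ∘ hM.eigenvalues)) := by
    rw [map_mul, ← hM.spectral_theorem]
  rw [hsq, hMM, Unitary.conjStarAlgAut_apply, trace_mul_cycle, ← mul_assoc,
    Unitary.coe_star_mul_self, one_mul, diagonal_mul_diagonal, trace_diagonal]
  simp [sq]

lemma frobNorm_le_sqrt_rank_mul_specNorm {M : Matrix ι ι ℝ} (hM : M.IsHermitian) :
    frobNorm M ≤ √M.rank * specNorm M := by
  have hsum : ∑ i, hM.eigenvalues i ^ 2 ≤ M.rank * specNorm M ^ 2 := by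
    rw [hM.rank_eq_card_non_zero_eigs, Fintype.card_subtype, ← nsmul_eq_mul,
      ← Finset.sum_filter_of_ne fun i _ hi => pow_ne_zero_iff two_ne_zero |>.mp hi]
    refine Finset.sum_le_card_nsmul _ _ _ fun i _ => ?_
    rw [← sq_abs]
    exact pow_le_pow_left₀ (abs_nonneg _) (abs_eigenvalues_le_specNorm hM i) 2
  rw [frobNorm, sum_sq_eq_sum_eigenvalues_sq hM, ← Real.sqrt_sq (specNorm_nonneg M),
    ← Real.sqrt_mul (Nat.cast_nonneg _)]
  exact Real.sqrt_le_sqrt hsum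

end Norms

section OuterSum

variable {κ ι : Type*} [Fintype κ]

def outerSum (a : κ → ℝ) (w : κ → ι → ℝ) : Matrix ι ι ℝ :=
  ∑ i, a i • vecMulVec (w i) (w i)

variable (a : κ → ℝ) (w : κ → ι → ℝ)

lemma isHermitian_outerSum : (outerSum a w).IsHermitian := by
  simp [outerSum, IsHermitian, transpose_sum, transpose_vecMulVec]

variable [Fintype ι]

lemma dotProduct_outerSum_mulVec (x : ι → ℝ) :
    x ⬝ᵥ (outerSum a w *ᵥ x) = ∑ i, a i * (w i ⬝ᵥ x) ^ 2 := by
  simp only [outerSum, sum_mulVec, dotProduct_sum, smul_mulVec, vecMulVec_mulVec,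
    dotProduct_smul, smul_eq_mul, op_smul_eq_mul]
  refine Finset.sum_congr rfl fun i _ => ?_
  rw [dotProduct_comm x (w i)]
  ring

lemma rank_outerSum_le :
    (outerSum a w).rank ≤ Module.finrank ℝ (Submodule.span ℝ (w '' {i | a i ≠ 0})) := by
  refine Submodule.finrank_mono ?_
  rintro - ⟨x, rfl⟩
  simp only [outerSum, mulVecLin_apply, sum_mulVec, smul_mulVec, vecMulVec_mulVec,
    op_smul_eq_smul]
  refine Submodule.sum_mem _ fun i _ => ?_
  by_cases hi : a i = 0
  · simp [hi]
  · exact Submodule.smul_mem _ _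
      (Submodule.smul_mem _ _ (Submodule.subset_span (Set.mem_image_of_mem w hi)))

end OuterSum

section Orthonormal

variable {ι : Type*} [Fintype ι] [DecidableEq ι] {w : ι → ι → ℝ}
  (horth : ∀ i j, w i ⬝ᵥ w j = if i = j then (1 : ℝ) else 0)
include horth

lemma sum_sq_dotProduct_eq_dotProduct_self (x : ι → ℝ) : ∑ i, (w i ⬝ᵥ x) ^ 2 = x ⬝ᵥ x := by
  have hW : (of w)ᵀ * of w = 1 := by
    refine mul_eq_one_comm.mp (ext fun i j => ?_)
    simpa [mul_apply, dotProduct, one_apply] using horth i j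
  calc ∑ i, (w i ⬝ᵥ x) ^ 2 = (of w *ᵥ x) ⬝ᵥ (of w *ᵥ x) := by simp [dotProduct, mulVec, sq]
    _ = x ⬝ᵥ x := by
      rw [dotProduct_mulVec, ← vecMul_transpose, vecMul_vecMul, hW, vecMul_one]

lemma dotProduct_outerSum_mulVec_self (a : ι → ℝ) (j : ι) :
    w j ⬝ᵥ (outerSum a w *ᵥ w j) = a j := by
  simp [dotProduct_outerSum_mulVec, dotProduct_comm _ (w j), horth]

lemma dotProduct_eq_zero_of_mem_span {s : Set ι} {j : ι} (hj : j ∉ s) {x : ι → ℝ}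
    (hx : x ∈ Submodule.span ℝ (w '' s)) : w j ⬝ᵥ x = 0 := by
  induction hx using Submodule.span_induction with
  | mem y hy =>
    obtain ⟨i, hi, rfl⟩ := hy
    rw [horth, if_neg (ne_of_mem_of_not_mem hi hj).symm]
  | zero => exact dotProduct_zero _
  | add y z _ _ hy hz => rw [dotProduct_add, hy, hz, add_zero]
  | smul c y _ hy => rw [dotProduct_smul, hy, smul_zero]

lemma dotProduct_outerSum_mulVec_pos {a : ι → ℝ} {x : ι → ℝ}
    (hx : x ∈ Submodule.span ℝ (w '' {i | 0 < a i})) (hx0 : x ≠ 0) :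
    0 < x ⬝ᵥ (outerSum a w *ᵥ x) := by
  have hout : ∀ i, ¬0 < a i → w i ⬝ᵥ x = 0 := fun i hi =>
    dotProduct_eq_zero_of_mem_span horth hi hx
  have hsq : ∑ i, (w i ⬝ᵥ x) ^ 2 ≠ 0 := by
    rw [sum_sq_dotProduct_eq_dotProduct_self horth]
    exact mt dotProduct_self_eq_zero.mp hx0
  obtain ⟨i, -, hi⟩ := Finset.exists_ne_zero_of_sum_ne_zero hsq
  have hai : 0 < a i := by_contra fun h => hi (by simp [hout i h])
  rw [dotProduct_outerSum_mulVec]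
  refine Finset.sum_pos' (fun j _ => ?_) ⟨i, Finset.mem_univ _, by positivity⟩
  by_cases hj : 0 < a j
  · positivity
  · simp [hout j hj]

variable {μ : ι → ℝ} {S : Matrix ι ι ℝ}

lemma rank_outerSum_posPart_le (hle : ∀ x, x ⬝ᵥ (outerSum μ w *ᵥ x) ≤ x ⬝ᵥ (S *ᵥ x)) :
    (outerSum (fun i => max (μ i) 0) w).rank ≤ S.rank := by
  have hsupp : {i | max (μ i) 0 ≠ 0} = {i | 0 < μ i} := by ext; simp
  refine (rank_outerSum_le _ w).trans ?_
  rw [hsupp]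
  refine finrank_le_rank_of_mulVec_injOn fun x hx hSx => by_contra fun hx0 => ?_
  exact (dotProduct_outerSum_mulVec_pos horth hx hx0).not_ge (by simpa [hSx] using hle x)

lemma abs_dotProduct_outerSum_posPart_sub_mulVec_le {c : ℝ} (hS : S.PosSemidef)
    (hle : ∀ x, x ⬝ᵥ (outerSum μ w *ᵥ x) ≤ x ⬝ᵥ (S *ᵥ x))
    (hge : ∀ x, x ⬝ᵥ (S *ᵥ x) ≤ x ⬝ᵥ (outerSum μ w *ᵥ x) + c * (x ⬝ᵥ x)) (x : ι → ℝ) :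
    |x ⬝ᵥ ((outerSum (fun i => max (μ i) 0) w - S) *ᵥ x)| ≤ c * (x ⬝ᵥ x) := by
  have hcoef : ∀ i, 0 ≤ max (μ i) 0 - μ i ∧ max (μ i) 0 - μ i ≤ c := fun i => by
    have hwi : w i ⬝ᵥ w i = 1 := by simp [horth]
    have hlo := hle (w i)
    have hhi := hge (w i)
    have hSi := hS.dotProduct_mulVec_nonneg (w i)
    rw [dotProduct_outerSum_mulVec_self horth] at hlo hhi
    rw [hwi] at hhi
    rw [star_trivial] at hSi
    exact ⟨sub_nonneg.2 (le_max_left _ _),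
      sub_le_iff_le_add.2 (max_le (by linarith) (by linarith))⟩
  have hgap : x ⬝ᵥ (outerSum (fun i => max (μ i) 0) w *ᵥ x) - x ⬝ᵥ (outerSum μ w *ᵥ x) =
      ∑ i, (max (μ i) 0 - μ i) * (w i ⬝ᵥ x) ^ 2 := by
    simp only [dotProduct_outerSum_mulVec, ← Finset.sum_sub_distrib, sub_mul]
  have hgap_nonneg : 0 ≤ ∑ i, (max (μ i) 0 - μ i) * (w i ⬝ᵥ x) ^ 2 :=
    Finset.sum_nonneg fun i _ => mul_nonneg (hcoef i).1 (sq_nonneg _)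
  have hgap_le : ∑ i, (max (μ i) 0 - μ i) * (w i ⬝ᵥ x) ^ 2 ≤ c * (x ⬝ᵥ x) := by
    rw [← sum_sq_dotProduct_eq_dotProduct_self horth x, Finset.mul_sum]
    exact Finset.sum_le_sum fun i _ => mul_le_mul_of_nonneg_right (hcoef i).2 (sq_nonneg _)
  rw [sub_mulVec, dotProduct_sub, abs_le]
  constructor <;> linarith [hle x, hge x]

lemma specNorm_outerSum_posPart_sub_le {c : ℝ} (hc : 0 ≤ c) (hS : S.PosSemidef)
    (hle : ∀ x, x ⬝ᵥ (outerSum μ w *ᵥ x) ≤ x ⬝ᵥ (S *ᵥ x))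
    (hge : ∀ x, x ⬝ᵥ (S *ᵥ x) ≤ x ⬝ᵥ (outerSum μ w *ᵥ x) + c * (x ⬝ᵥ x)) :
    specNorm (outerSum (fun i => max (μ i) 0) w - S) ≤ c :=
  specNorm_le_of_abs_dotProduct_mulVec_le ((isHermitian_outerSum _ w).sub hS.isHermitian) hc
    (abs_dotProduct_outerSum_posPart_sub_mulVec_le horth hS hle hge)

end Orthonormal

theorem eigenvalue_truncation_close_general {d n : ℕ}
    (S E T T' : Matrix (Fin d) (Fin d) ℝ) (ε : ℝ)
    (hT : T = S + E) (hS : S.PosSemidef) (hrank : S.rank ≤ n)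
    (hEnorm : specNorm E ≤ ε)
    (μ : Fin d → ℝ) (w : Fin d → Fin d → ℝ)
    (horth : ∀ i j, w i ⬝ᵥ w j = if i = j then (1 : ℝ) else 0)
    (hdecomp : T - ε • (1 : Matrix (Fin d) (Fin d) ℝ) =
      ∑ i, μ i • Matrix.vecMulVec (w i) (w i))
    (hT' : T' = ∑ i, (max (μ i) 0) • Matrix.vecMulVec (w i) (w i)) :
    T'.rank ≤ n ∧ specNorm (T' - S) ≤ 2 * ε ∧
      frobNorm (T' - S) ≤ 2 * ε * Real.sqrt (2 * n) := by
  have hε : 0 ≤ ε := (specNorm_nonneg E).trans hEnorm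
  have hE x := abs_le.mp (abs_dotProduct_mulVec_le_of_specNorm_le hEnorm x)
  have hA x : x ⬝ᵥ (outerSum μ w *ᵥ x) = x ⬝ᵥ (S *ᵥ x) + x ⬝ᵥ (E *ᵥ x) - ε * (x ⬝ᵥ x) := by
    rw [outerSum, ← hdecomp, hT]
    simp only [sub_mulVec, add_mulVec, smul_mulVec, one_mulVec, dotProduct_sub, dotProduct_add,
      dotProduct_smul, smul_eq_mul]
  have hle x : x ⬝ᵥ (outerSum μ w *ᵥ x) ≤ x ⬝ᵥ (S *ᵥ x) := by
    linarith [hA x, (hE x).2]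
  have hge x : x ⬝ᵥ (S *ᵥ x) ≤ x ⬝ᵥ (outerSum μ w *ᵥ x) + 2 * ε * (x ⬝ᵥ x) := by
    linarith [hA x, (hE x).1]
  replace hT' : T' = outerSum (fun i => max (μ i) 0) w := hT'
  have hrankT' : T'.rank ≤ n := by
    rw [hT']; exact (rank_outerSum_posPart_le horth hle).trans hrank
  have hspec : specNorm (T' - S) ≤ 2 * ε := by
    rw [hT']; exact specNorm_outerSum_posPart_sub_le horth (by positivity) hS hle hge
  have hD : (T' - S).IsHermitian := by
    rw [hT']; exact (isHermitian_outerSum _ w).sub hS.isHermitian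
  have hrankD : ((T' - S).rank : ℝ) ≤ 2 * n := by
    exact_mod_cast (rank_sub_le T' S).trans (by omega)
  refine ⟨hrankT', hspec, ?_⟩
  calc frobNorm (T' - S) ≤ √(T' - S).rank * specNorm (T' - S) :=
        frobNorm_le_sqrt_rank_mul_specNorm hD
    _ ≤ √(2 * n) * (2 * ε) := by gcongr; exact specNorm_nonneg _
    _ = 2 * ε * √(2 * n) := mul_comm _ _

/-- Truncating the eigenvalues of `T = S + E` below `ε` yields a matrix of rank at most
`rank S` that is `2ε`-close to `S` in spectral norm and `2ε√(2n)`-close in Frobenius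
norm. -/
theorem eigenvalue_truncation_close {d n : ℕ}
    (S E T T' : Matrix (Fin d) (Fin d) ℝ) (ε : ℝ)
    (hT : T = S + E) (hS : S.PosSemidef) (hrank : S.rank ≤ n)
    (hEsym : E.IsSymm) (hEnorm : specNorm E ≤ ε)
    (μ : Fin d → ℝ) (w : Fin d → Fin d → ℝ)
    (horth : ∀ i j, w i ⬝ᵥ w j = if i = j then (1 : ℝ) else 0)
    (hdecomp : T - ε • (1 : Matrix (Fin d) (Fin d) ℝ) =
      ∑ i, μ i • Matrix.vecMulVec (w i) (w i))
    (hT' : T' = ∑ i, (max (μ i) 0) • Matrix.vecMulVec (w i) (w i)) :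
    T'.rank ≤ n ∧ specNorm (T' - S) ≤ 2 * ε ∧
      frobNorm (T' - S) ≤ 2 * ε * Real.sqrt (2 * n) :=
  eigenvalue_truncation_close_general S E T T' ε hT hS hrank hEnorm μ w horth hdecomp hT'
end

section
/- Let a₁,…,aₖ and b₁,…,bₖ be two families of orthonormal vectors in ℝ^d such that ⟨aᵢ, bᵢ⟩² ≥ 1 - ε for each i. Let U and V be the d²×k matrices whose i-th columns are aᵢ ⊗ aᵢ and bᵢ ⊗ bᵢ respectively. Then ‖U - V‖ ≤ 2√ε, where ‖·‖ is the spectral norm. -/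
open Matrix
open scoped Kronecker

lemma sum_dotProduct' {n k : ℕ} (f : Fin k → Fin n → ℝ) (v : Fin n → ℝ) :
    (∑ j, f j) ⬝ᵥ v = ∑ j, f j ⬝ᵥ v := by
  simp only [dotProduct, Finset.sum_apply, Finset.sum_mul]
  exact Finset.sum_comm

lemma dotProduct_sum' {n k : ℕ} (v : Fin n → ℝ) (f : Fin k → Fin n → ℝ) :
    v ⬝ᵥ (∑ j, f j) = ∑ j, v ⬝ᵥ f j := by
  simp only [dotProduct, Finset.sum_apply, Finset.mul_sum]
  exact Finset.sum_comm

lemma dot_cs {d : ℕ} (u v : Fin d → ℝ) : (u ⬝ᵥ v)^2 ≤ (u ⬝ᵥ u) * (v ⬝ᵥ v) := by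
  simp only [dotProduct]
  have h := Finset.sum_mul_sq_le_sq_mul_sq Finset.univ u v
  simpa [sq] using h

lemma bessel {d k : ℕ} (c : Fin k → Fin d → ℝ)
    (hc : ∀ i j, c i ⬝ᵥ c j = if i = j then (1:ℝ) else 0)
    (v : Fin d → ℝ) (hv : v ⬝ᵥ v = 1) :
    ∑ j, (v ⬝ᵥ c j)^2 ≤ 1 := by
  set t : Fin k → ℝ := fun j => v ⬝ᵥ c j with ht
  set w : Fin d → ℝ := v - ∑ j, t j • c j with hw
  have h0 : (0:ℝ) ≤ w ⬝ᵥ w := Finset.sum_nonneg fun i _ => mul_self_nonneg _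
  have hexp : w ⬝ᵥ w = 1 - ∑ j, t j ^ 2 := by
    rw [hw, sub_dotProduct, dotProduct_sub, dotProduct_sub, sum_dotProduct',
      dotProduct_sum', hv]
    have h1 : ∀ j, (t j • c j) ⬝ᵥ v = t j ^ 2 := by
      intro j
      rw [smul_dotProduct, dotProduct_comm]
      simp [ht, sq, smul_eq_mul]
    have h2 : ∀ j, v ⬝ᵥ (t j • c j) = t j ^ 2 := by
      intro j
      rw [dotProduct_smul]
      simp [ht, sq, smul_eq_mul]
    have h3 : (∑ j, t j • c j) ⬝ᵥ (∑ j, t j • c j) = ∑ j, t j ^ 2 := by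
      rw [sum_dotProduct']
      rw [Finset.sum_congr rfl fun j _ => dotProduct_sum' _ _]
      have h4 : ∀ j : Fin k, ∑ l, (t j • c j) ⬝ᵥ (t l • c l) = t j ^ 2 := by
        intro j
        rw [Finset.sum_congr rfl fun l (_ : l ∈ Finset.univ) => by
          rw [smul_dotProduct, dotProduct_smul, hc, smul_eq_mul, smul_eq_mul]]
        simp [Finset.sum_ite_eq, sq]
      rw [Finset.sum_congr rfl fun j _ => h4 j]
    rw [Finset.sum_congr rfl fun j _ => h2 j, h3]
    rw [Finset.sum_congr rfl fun j _ => h1 j]; ring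
  linarith [hexp ▸ h0]

lemma col_dot {d : ℕ} (u v : Fin d → ℝ) :
    ∑ p : Fin d × Fin d, (u p.1 * u p.2) * (v p.1 * v p.2) = (u ⬝ᵥ v) ^ 2 := by
  rw [Fintype.sum_prod_type]
  simp only [dotProduct, sq]
  rw [Finset.sum_mul_sum]
  apply Finset.sum_congr rfl; intro x _
  apply Finset.sum_congr rfl; intro y _
  ring

/-- If two orthonormal families are pairwise `ε`-close, the matrices of their tensor
squares are `2√ε`-close in spectral norm. -/
theorem tensor_square_matrix_close {d k : ℕ} (ε : ℝ) (a b : Fin k → Fin d → ℝ)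
    (ha : ∀ i j, a i ⬝ᵥ a j = if i = j then (1 : ℝ) else 0)
    (hb : ∀ i j, b i ⬝ᵥ b j = if i = j then (1 : ℝ) else 0)
    (hab : ∀ i, 1 - ε ≤ (a i ⬝ᵥ b i) ^ 2)
    (U V : Matrix (Fin d × Fin d) (Fin k) ℝ)
    (hU : ∀ p i, U p i = a i p.1 * a i p.2)
    (hV : ∀ p i, V p i = b i p.1 * b i p.2) :
    specNorm (U - V) ≤ 2 * Real.sqrt ε := by
  rw [specNorm]
  apply ContinuousLinearMap.opNorm_le_bound _ (by positivity)
  intro x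
  have hTx : (LinearMap.toContinuousLinearMap (Matrix.toEuclideanLin (U - V))) x
      = (EuclideanSpace.equiv (Fin d × Fin d) ℝ).symm ((U - V) *ᵥ x) := by
    simp [Matrix.toEuclideanLin, Matrix.toLin'_apply, Matrix.sub_mulVec]
    rfl
  rcases Nat.eq_zero_or_pos k with hk | hk
  · subst hk
    have hx : x = 0 := Subsingleton.elim x 0
    simp [hx]
  -- ε ≥ 0
  have hone : ∀ i, (a i ⬝ᵥ b i)^2 ≤ 1 := by
    intro i
    have := dot_cs (a i) (b i)
    simpa [ha i i, hb i i] using this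
  have hε : 0 ≤ ε := by
    obtain ⟨i0⟩ : Nonempty (Fin k) := ⟨⟨0, hk⟩⟩
    have := hab i0
    have := hone i0
    linarith
  set A := U - V with hA
  set M := Aᵀ * A with hM
  have hMentry : ∀ i j, M i j =
      (if i = j then (2:ℝ) else 0) - (a i ⬝ᵥ b j)^2 - (a j ⬝ᵥ b i)^2 := by
    intro i j
    rw [hM, Matrix.mul_apply]
    have : ∀ p : Fin d × Fin d, Aᵀ i p * A p j =
        (a i p.1 * a i p.2) * (a j p.1 * a j p.2)
        - (a i p.1 * a i p.2) * (b j p.1 * b j p.2)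
        - (b i p.1 * b i p.2) * (a j p.1 * a j p.2)
        + (b i p.1 * b i p.2) * (b j p.1 * b j p.2) := by
      intro p
      simp only [hA, Matrix.transpose_apply, Matrix.sub_apply, hU, hV]
      ring
    rw [Finset.sum_congr rfl fun p _ => this p]
    rw [Finset.sum_add_distrib, Finset.sum_sub_distrib, Finset.sum_sub_distrib]
    rw [col_dot, col_dot, col_dot, col_dot]
    have e1 : (a i ⬝ᵥ a j)^2 = if i = j then (1:ℝ) else 0 := by
      rw [ha]; split <;> norm_num
    have e2 : (b i ⬝ᵥ b j)^2 = if i = j then (1:ℝ) else 0 := by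
      rw [hb]; split <;> norm_num
    have e3 : (b i ⬝ᵥ a j)^2 = (a j ⬝ᵥ b i)^2 := by rw [dotProduct_comm]
    rw [e1, e2, e3]
    split <;> ring
  have hMsymm : ∀ i j, M j i = M i j := by
    intro i j
    rw [hMentry, hMentry]
    by_cases h : i = j
    · subst h; ring
    · rw [if_neg h, if_neg (fun hh => h hh.symm)]; ring
  -- row sums
  have hrow : ∀ i, ∑ j, |M i j| ≤ 4 * ε := by
    intro i
    have hBa : ∑ j, (a i ⬝ᵥ b j)^2 ≤ 1 := bessel b hb (a i) (by simpa using ha i i)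
    have hBb : ∑ j, (b i ⬝ᵥ a j)^2 ≤ 1 := bessel a ha (b i) (by simpa using hb i i)
    have h1 : ∑ j ∈ Finset.univ.erase i, (a i ⬝ᵥ b j)^2 ≤ ε := by
      have hsplit : ∑ j ∈ Finset.univ.erase i, (a i ⬝ᵥ b j)^2 + (a i ⬝ᵥ b i)^2
          = ∑ j, (a i ⬝ᵥ b j)^2 :=
        Finset.sum_erase_add _ _ (Finset.mem_univ i)
      have := hab i
      linarith
    have h2 : ∑ j ∈ Finset.univ.erase i, (b i ⬝ᵥ a j)^2 ≤ ε := by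
      have hsplit : ∑ j ∈ Finset.univ.erase i, (b i ⬝ᵥ a j)^2 + (b i ⬝ᵥ a i)^2
          = ∑ j, (b i ⬝ᵥ a j)^2 :=
        Finset.sum_erase_add _ _ (Finset.mem_univ i)
      have hcomm : (b i ⬝ᵥ a i)^2 = (a i ⬝ᵥ b i)^2 := by rw [dotProduct_comm]
      have := hab i
      rw [hcomm] at hsplit
      linarith
    have hdiag : |M i i| ≤ 2 * ε := by
      rw [hMentry, if_pos rfl]
      have := hone i
      have := hab i
      rw [abs_of_nonneg (by linarith)]
      linarith
    have hoff : ∀ j ∈ Finset.univ.erase i,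
        |M i j| = (a i ⬝ᵥ b j)^2 + (a j ⬝ᵥ b i)^2 := by
      intro j hj
      have hij : i ≠ j := fun h => (Finset.mem_erase.mp hj).1 h.symm
      rw [hMentry, if_neg hij]
      rw [abs_of_nonpos (by nlinarith [sq_nonneg (a i ⬝ᵥ b j), sq_nonneg (a j ⬝ᵥ b i)])]
      ring
    calc ∑ j, |M i j|
        = (∑ j ∈ Finset.univ.erase i, |M i j|) + |M i i| :=
          (Finset.sum_erase_add _ _ (Finset.mem_univ i)).symm
      _ ≤ (∑ j ∈ Finset.univ.erase i, ((a i ⬝ᵥ b j)^2 + (a j ⬝ᵥ b i)^2)) + 2*ε := by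
          rw [Finset.sum_congr rfl hoff]
          linarith [hdiag]
      _ = (∑ j ∈ Finset.univ.erase i, (a i ⬝ᵥ b j)^2)
          + (∑ j ∈ Finset.univ.erase i, (b i ⬝ᵥ a j)^2) + 2*ε := by
          rw [Finset.sum_add_distrib]
          congr 1
          · congr 1
            apply Finset.sum_congr rfl
            intro j _
            rw [dotProduct_comm]
      _ ≤ ε + ε + 2*ε := by linarith
      _ = 4*ε := by ring
  -- quadratic form bound
  have hquad : x ⬝ᵥ (M *ᵥ (x : Fin k → ℝ)) ≤ 4 * ε * ((x : Fin k → ℝ) ⬝ᵥ x) := by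
    have expand : x ⬝ᵥ (M *ᵥ (x : Fin k → ℝ)) = ∑ i, ∑ j, x i * (M i j * x j) := by
      simp only [dotProduct, Matrix.mulVec, dotProduct, Finset.mul_sum]
    rw [expand]
    have step1 : ∀ i j, x i * (M i j * x j) ≤ |M i j| * ((x i^2 + x j^2)/2) := by
      intro i j
      calc x i * (M i j * x j) ≤ |x i * (M i j * x j)| := le_abs_self _
        _ = |M i j| * (|x i| * |x j|) := by rw [abs_mul, abs_mul]; ring
        _ ≤ |M i j| * ((x i^2 + x j^2)/2) := by
            apply mul_le_mul_of_nonneg_left _ (abs_nonneg _)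
            nlinarith [sq_nonneg (|x i| - |x j|), sq_abs (x i), sq_abs (x j)]
    calc ∑ i, ∑ j, x i * (M i j * x j)
        ≤ ∑ i, ∑ j, |M i j| * ((x i^2 + x j^2)/2) :=
          Finset.sum_le_sum fun i _ => Finset.sum_le_sum fun j _ => step1 i j
      _ = ((∑ i, ∑ j, |M i j| * x i^2) + (∑ i, ∑ j, |M i j| * x j^2))/2 := by
          rw [← Finset.sum_add_distrib, Finset.sum_div]
          apply Finset.sum_congr rfl; intro i _
          rw [← Finset.sum_add_distrib, Finset.sum_div]
          apply Finset.sum_congr rfl; intro j _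
          ring
      _ ≤ ((4*ε * ∑ i, x i^2) + (4*ε * ∑ j, x j^2))/2 := by
          have t1 : ∑ i, ∑ j, |M i j| * x i^2 ≤ 4*ε * ∑ i, x i^2 := by
            rw [Finset.mul_sum]
            apply Finset.sum_le_sum
            intro i _
            rw [← Finset.sum_mul]
            exact mul_le_mul_of_nonneg_right (hrow i) (sq_nonneg _)
          have t2 : ∑ i, ∑ j, |M i j| * x j^2 ≤ 4*ε * ∑ j, x j^2 := by
            rw [Finset.sum_comm, Finset.mul_sum]
            apply Finset.sum_le_sum
            intro j _
            rw [← Finset.sum_mul]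
            refine mul_le_mul_of_nonneg_right ?_ (sq_nonneg _)
            calc ∑ i, |M i j| = ∑ i, |M j i| := by
                  apply Finset.sum_congr rfl; intro i _; rw [hMsymm]
              _ ≤ 4*ε := hrow j
          linarith
      _ = 4 * ε * ((x : Fin k → ℝ) ⬝ᵥ x) := by
          simp only [dotProduct]
          rw [Finset.sum_congr rfl fun i (_ : i ∈ Finset.univ) => (sq (x i)).symm]
          ring
  -- finish
  rw [hTx]
  have hxnorm : ‖x‖ = Real.sqrt ((x : Fin k → ℝ) ⬝ᵥ x) := by
    rw [EuclideanSpace.norm_eq]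
    congr 1
    simp [dotProduct, sq, Real.norm_eq_abs, abs_mul_abs_self]
  have hwnorm : ‖(EuclideanSpace.equiv (Fin d × Fin d) ℝ).symm ((U - V) *ᵥ x)‖
      = Real.sqrt ((A *ᵥ (x : Fin k → ℝ)) ⬝ᵥ (A *ᵥ x)) := by
    rw [EuclideanSpace.norm_eq]
    congr 1
    simp [hA, dotProduct, sq, Real.norm_eq_abs, abs_mul_abs_self]
  have hkey : (A *ᵥ (x : Fin k → ℝ)) ⬝ᵥ (A *ᵥ x) = x ⬝ᵥ (M *ᵥ (x : Fin k → ℝ)) := by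
    rw [hM, ← Matrix.mulVec_mulVec]
    conv_rhs => rw [Matrix.dotProduct_mulVec, Matrix.vecMul_transpose]
  rw [hwnorm, hkey, hxnorm]
  calc Real.sqrt (x ⬝ᵥ (M *ᵥ (x : Fin k → ℝ)))
      ≤ Real.sqrt (4 * ε * ((x : Fin k → ℝ) ⬝ᵥ x)) := Real.sqrt_le_sqrt hquad
    _ = 2 * Real.sqrt ε * Real.sqrt ((x : Fin k → ℝ) ⬝ᵥ x) := by
        rw [Real.sqrt_mul (by linarith), Real.sqrt_mul (by norm_num : (0:ℝ) ≤ 4)]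
        rw [show Real.sqrt 4 = 2 by
          rw [show (4:ℝ) = 2^2 by norm_num, Real.sqrt_sq (by norm_num)]]
end

section
/- Let a₁,…,aₖ and b₁,…,bₖ be two families of orthonormal vectors in ℝ^d with ⟨aᵢ, bᵢ⟩² ≥ 1 - ε for each i. Then the spectral norm of Σᵢ (aᵢ⊗aᵢ)(aᵢ⊗aᵢ)ᵀ - (bᵢ⊗bᵢ)(bᵢ⊗bᵢ)ᵀ, as a d²×d² matrix, is at most 4√ε. -/
/-!
Write `Aᵢ = aᵢ ⊗ aᵢ`, `Bᵢ = bᵢ ⊗ bᵢ`; these are again orthonormal families, and the matrix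
is `∑ AᵢAᵢᵀ - BᵢBᵢᵀ = ½ ∑ (VᵢWᵢᵀ + WᵢVᵢᵀ)` with `Vᵢ = Aᵢ - Bᵢ`, `Wᵢ = Aᵢ + Bᵢ`. Its norm
is therefore at most `‖V‖ ‖W‖`, where `V`, `W` are the matrices with rows `Vᵢ`, `Wᵢ`.
Clearly `‖W‖ ≤ 2`. For `V`, `‖V‖² = ‖VVᵀ‖` is the norm of the Gram matrix `⟨Vᵢ, Vⱼ⟩`,
which by the Schur test is at most its largest absolute row sum. Off the diagonal
`⟨Vᵢ, Vⱼ⟩ = -⟨aᵢ, bⱼ⟩² - ⟨aⱼ, bᵢ⟩²`, so by Bessel's inequality the `i`-th row sum is at most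
`4 (1 - ⟨aᵢ, bᵢ⟩²) ≤ 4ε`, giving `‖V‖ ≤ 2√ε`.
-/

open Matrix
open scoped Kronecker

open scoped Matrix.Norms.L2Operator

namespace Matrix

variable {m n ι : Type*}

theorem l2_opNorm_transpose [Fintype m] [Fintype n] [DecidableEq m] [DecidableEq n]
    (A : Matrix m n ℝ) : ‖Aᵀ‖ = ‖A‖ := by
  rw [← conjTranspose_eq_transpose_of_trivial, l2_opNorm_conjTranspose]

theorem l2_opNorm_mul_conjTranspose_self [Fintype m] [Fintype n] [DecidableEq m] [DecidableEq n]
    (A : Matrix m n ℝ) : ‖A * Aᴴ‖ = ‖A‖ * ‖A‖ := by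
  rw [← l2_opNorm_conjTranspose A, ← l2_opNorm_conjTranspose_mul_self, conjTranspose_conjTranspose]

theorem l2_opNorm_le_of_abs_sum_le [Fintype m] [Fintype n] [DecidableEq n] {G : Matrix m n ℝ}
    {R C : ℝ} (hR : 0 ≤ R) (hrow : ∀ i, ∑ j, |G i j| ≤ R) (hcol : ∀ j, ∑ i, |G i j| ≤ C) :
    ‖G‖ ≤ √(R * C) := by
  refine ContinuousLinearMap.opNorm_le_bound _ (Real.sqrt_nonneg _) fun x => ?_
  rw [← Real.sqrt_sq (norm_nonneg _), ← Real.sqrt_sq (norm_nonneg x),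
    ← Real.sqrt_mul' _ (sq_nonneg _)]
  refine Real.sqrt_le_sqrt ?_
  rw [EuclideanSpace.real_norm_sq_eq, EuclideanSpace.real_norm_sq_eq]
  change ∑ i, (∑ j, G i j * x j) ^ 2 ≤ R * C * ∑ j, x j ^ 2
  have cauchy_schwarz (i : m) :
      (∑ j, G i j * x j) ^ 2 ≤ (∑ j, |G i j|) * ∑ j, |G i j| * x j ^ 2 :=
    Finset.sum_sq_le_sum_mul_sum_of_sq_le_mul _ (fun j _ => abs_nonneg _)
      (fun j _ => by positivity) fun j _ => le_of_eq <| by rw [mul_pow, ← sq_abs (G i j)]; ring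
  calc ∑ i, (∑ j, G i j * x j) ^ 2 ≤ ∑ i, R * ∑ j, |G i j| * x j ^ 2 :=
        Finset.sum_le_sum fun i _ => (cauchy_schwarz i).trans <|
          mul_le_mul_of_nonneg_right (hrow i) (by positivity)
    _ = R * ∑ j, (∑ i, |G i j|) * x j ^ 2 := by
        rw [← Finset.mul_sum, Finset.sum_comm]
        simp only [Finset.sum_mul]
    _ ≤ R * ∑ j, C * x j ^ 2 := by gcongr with j; exact hcol j
    _ = R * C * ∑ j, x j ^ 2 := by rw [← Finset.mul_sum, mul_assoc]

theorem of_mul_transpose_of [Fintype n] (u w : ι → n → ℝ) :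
    of u * (of w)ᵀ = of fun i j => u i ⬝ᵥ w j := rfl

theorem sum_vecMulVec_eq_transpose_mul [Fintype ι] (u w : ι → n → ℝ) :
    ∑ i, vecMulVec (u i) (w i) = (of u)ᵀ * of w := by
  ext p q
  simp [mul_apply, vecMulVec_apply, Matrix.sum_apply]

theorem l2_opNorm_of_le_sqrt_of_sum_abs_dotProduct_le [Fintype ι] [Fintype n] [DecidableEq ι]
    [DecidableEq n] {v : ι → n → ℝ} {C : ℝ} (hC : 0 ≤ C) (hrow : ∀ i, ∑ j, |v i ⬝ᵥ v j| ≤ C) :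
    ‖of v‖ ≤ √C := by
  have hcol (j : ι) : ∑ i, |v i ⬝ᵥ v j| ≤ C := by
    simpa only [dotProduct_comm (v _) (v j)] using hrow j
  have gram : ‖of v‖ * ‖of v‖ ≤ C := by
    rw [← l2_opNorm_mul_conjTranspose_self, conjTranspose_eq_transpose_of_trivial,
      of_mul_transpose_of, ← Real.sqrt_mul_self hC]
    exact l2_opNorm_le_of_abs_sum_le hC hrow hcol
  exact Real.le_sqrt_of_sq_le (by rwa [sq])

theorem l2_opNorm_of_le_one_of_orthonormal [Fintype ι] [Fintype n] [DecidableEq ι]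
    [DecidableEq n] {u : ι → n → ℝ} (hu : ∀ i j, u i ⬝ᵥ u j = if i = j then (1 : ℝ) else 0) :
    ‖of u‖ ≤ 1 := by
  simpa using l2_opNorm_of_le_sqrt_of_sum_abs_dotProduct_le zero_le_one fun i => by
    simp [hu, apply_ite (|·|)]

theorem sum_sq_dotProduct_le [Fintype ι] [Fintype n] [DecidableEq n] (u : ι → n → ℝ)
    (x : n → ℝ) : ∑ i, (u i ⬝ᵥ x) ^ 2 ≤ ‖of u‖ ^ 2 * (x ⬝ᵥ x) := by
  have h := pow_le_pow_left₀ (norm_nonneg _) (l2_opNorm_mulVec (of u) (WithLp.toLp 2 x)) 2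
  rw [mul_pow, EuclideanSpace.real_norm_sq_eq, EuclideanSpace.real_norm_sq_eq] at h
  simpa [dotProduct, mulVec, sq] using h

theorem sum_sq_dotProduct_le_of_orthonormal [Fintype ι] [Fintype n] [DecidableEq ι]
    [DecidableEq n] {u : ι → n → ℝ} (hu : ∀ i j, u i ⬝ᵥ u j = if i = j then (1 : ℝ) else 0)
    (x : n → ℝ) : ∑ i, (u i ⬝ᵥ x) ^ 2 ≤ x ⬝ᵥ x :=
  (sum_sq_dotProduct_le u x).trans <| mul_le_of_le_one_left (dotProduct_self_star_nonneg x)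
    (pow_le_one₀ (norm_nonneg _) (l2_opNorm_of_le_one_of_orthonormal hu))

theorem l2_opNorm_sum_vecMulVec_sub_le [Fintype ι] [Fintype n] [DecidableEq ι] [DecidableEq n]
    (u w : ι → n → ℝ) :
    ‖∑ i, (vecMulVec (u i) (u i) - vecMulVec (w i) (w i))‖ ≤ ‖of (u - w)‖ * ‖of (u + w)‖ := by
  have polarization : (2 : ℝ) • ∑ i, (vecMulVec (u i) (u i) - vecMulVec (w i) (w i)) =
      (of (u - w))ᵀ * of (u + w) + (of (u + w))ᵀ * of (u - w) := by
    rw [Finset.sum_sub_distrib, sum_vecMulVec_eq_transpose_mul, sum_vecMulVec_eq_transpose_mul,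
      ← of_sub_of, ← of_add_of]
    simp only [transpose_add, transpose_sub, Matrix.add_mul, Matrix.sub_mul, Matrix.mul_add,
      Matrix.mul_sub]
    module
  have h := norm_add_le ((of (u - w))ᵀ * of (u + w)) ((of (u + w))ᵀ * of (u - w))
  rw [← polarization, norm_smul, Real.norm_two] at h
  have hDS := l2_opNorm_mul (of (u - w))ᵀ (of (u + w))
  have hSD := l2_opNorm_mul (of (u + w))ᵀ (of (u - w))
  rw [l2_opNorm_transpose] at hDS hSD
  linarith

end Matrix

def tensorSq {n : Type*} (u : n → ℝ) : n × n → ℝ := fun p => u p.1 * u p.2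

theorem tensorSq_dotProduct_tensorSq {n : Type*} [Fintype n] (u w : n → ℝ) :
    tensorSq u ⬝ᵥ tensorSq w = (u ⬝ᵥ w) ^ 2 := by
  simp only [tensorSq, dotProduct, Fintype.sum_prod_type, sq, Finset.sum_mul_sum]
  exact Finset.sum_congr rfl fun p _ => Finset.sum_congr rfl fun q _ => by ring

theorem tensorSq_orthonormal {ι n : Type*} [DecidableEq ι] [Fintype n] {u : ι → n → ℝ}
    (hu : ∀ i j, u i ⬝ᵥ u j = if i = j then (1 : ℝ) else 0) (i j : ι) :
    tensorSq (u i) ⬝ᵥ tensorSq (u j) = if i = j then (1 : ℝ) else 0 := by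
  simp [tensorSq_dotProduct_tensorSq, hu, ite_pow]

theorem sum_abs_dotProduct_tensorSq_sub_le {ι n : Type*} [Fintype ι] [DecidableEq ι] [Fintype n]
    [DecidableEq n] {a b : ι → n → ℝ}
    (ha : ∀ i j, a i ⬝ᵥ a j = if i = j then (1 : ℝ) else 0)
    (hb : ∀ i j, b i ⬝ᵥ b j = if i = j then (1 : ℝ) else 0) (i : ι) :
    ∑ j, |(tensorSq (a i) - tensorSq (b i)) ⬝ᵥ (tensorSq (a j) - tensorSq (b j))| ≤
      4 * (1 - (a i ⬝ᵥ b i) ^ 2) := by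
  have bessel_a : ∑ j, (a j ⬝ᵥ b i) ^ 2 ≤ 1 := by
    simpa [hb] using sum_sq_dotProduct_le_of_orthonormal ha (b i)
  have bessel_b : ∑ j, (a i ⬝ᵥ b j) ^ 2 ≤ 1 := by
    simpa [dotProduct_comm, ha] using sum_sq_dotProduct_le_of_orthonormal hb (a i)
  have hs : (a i ⬝ᵥ b i) ^ 2 ≤ 1 :=
    (Finset.single_le_sum (fun j _ => sq_nonneg (a i ⬝ᵥ b j)) (Finset.mem_univ i)).trans bessel_b
  have habs (j : ι) :
      |(tensorSq (a i) - tensorSq (b i)) ⬝ᵥ (tensorSq (a j) - tensorSq (b j))| =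
        (a i ⬝ᵥ b j) ^ 2 + (a j ⬝ᵥ b i) ^ 2 + if i = j then 2 - 4 * (a i ⬝ᵥ b i) ^ 2 else 0 := by
    simp only [sub_dotProduct, dotProduct_sub, tensorSq_dotProduct_tensorSq, ha, hb,
      dotProduct_comm (b i) (a j)]
    split_ifs with hij
    · subst hij
      rw [abs_of_nonneg (by nlinarith)]
      ring
    · rw [← abs_neg, abs_of_nonneg (by nlinarith)]
      ring
  simp only [habs, Finset.sum_add_distrib, Finset.sum_ite_eq, Finset.mem_univ, if_true]
  linarith

/-- If two orthonormal families are pairwise `ε`-close, then the difference of the sums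
of their fourth tensor powers, as a `d²×d²` matrix, has spectral norm at most `4√ε`. -/
theorem fourth_power_sum_close {d k : ℕ} (ε : ℝ) (a b : Fin k → Fin d → ℝ)
    (ha : ∀ i j, a i ⬝ᵥ a j = if i = j then (1 : ℝ) else 0)
    (hb : ∀ i j, b i ⬝ᵥ b j = if i = j then (1 : ℝ) else 0)
    (hab : ∀ i, 1 - ε ≤ (a i ⬝ᵥ b i) ^ 2) :
    specNorm (∑ i,
        (Matrix.vecMulVec (fun p : Fin d × Fin d => a i p.1 * a i p.2)
            (fun p : Fin d × Fin d => a i p.1 * a i p.2) -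
          Matrix.vecMulVec (fun p : Fin d × Fin d => b i p.1 * b i p.2)
            (fun p : Fin d × Fin d => b i p.1 * b i p.2))) ≤ 4 * Real.sqrt ε := by
  rcases isEmpty_or_nonempty (Fin k) with hk | ⟨⟨i₀⟩⟩
  · simp [specNorm]
  set A : Fin k → Fin d × Fin d → ℝ := fun i => tensorSq (a i)
  set B : Fin k → Fin d × Fin d → ℝ := fun i => tensorSq (b i)
  have row_sum := sum_abs_dotProduct_tensorSq_sub_le ha hb
  have hε : 0 ≤ ε := by
    have := (Finset.sum_nonneg fun j _ => abs_nonneg _).trans (row_sum i₀)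
    linarith [hab i₀]
  have hV : ‖of (A - B)‖ ≤ 2 * √ε :=
    calc ‖of (A - B)‖ ≤ √(4 * ε) :=
          l2_opNorm_of_le_sqrt_of_sum_abs_dotProduct_le (by positivity) fun i =>
            (row_sum i).trans (by linarith [hab i])
      _ = 2 * √ε := by rw [Real.sqrt_mul' _ hε]; norm_num
  have hW : ‖of (A + B)‖ ≤ 2 := by
    rw [← of_add_of]
    linarith [norm_add_le (of A) (of B),
      l2_opNorm_of_le_one_of_orthonormal (tensorSq_orthonormal ha),
      l2_opNorm_of_le_one_of_orthonormal (tensorSq_orthonormal hb)]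
  calc _ = ‖∑ i, (vecMulVec (A i) (A i) - vecMulVec (B i) (B i))‖ := rfl
    _ ≤ ‖of (A - B)‖ * ‖of (A + B)‖ := l2_opNorm_sum_vecMulVec_sub_le A B
    _ ≤ 2 * √ε * 2 := mul_le_mul hV hW (norm_nonneg _) (by positivity)
    _ = 4 * √ε := by ring
end

section
/- Let a₁,…,aₙ ∈ ℝ^d be linearly independent vectors with Gram-type matrix S = Σᵢ aᵢaᵢᵀ satisfying ‖S - Id_V‖ ≤ ε on the span V of the aᵢ, ε < 1. Define ãᵢ = S^{-1/2} aᵢ (pseudo-inverse square root on V). Then ã₁,…,ãₙ are orthonormal, and ⟨ãᵢ, aᵢ⟩² ≥ (1-ε)‖aᵢ‖² for every i. -/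
open Matrix
open scoped Kronecker

/-!
Write `V` for the span of the `aᵢ`. Since `V` is finite-dimensional, `B² S = 1` on `V` also gives
`S B² = 1` and `B S B = 1` on `V`. As `S (B² aⱼ) = Σₖ ⟨aₖ, B² aⱼ⟩ aₖ = aⱼ`, linear independence
yields `⟨B aₖ, B aⱼ⟩ = ⟨aₖ, B² aⱼ⟩ = δₖⱼ`.

For the correlation bound let `u = B aᵢ`, `X = ⟨u, aᵢ⟩` and `Y = ‖aᵢ‖²`. Cauchy–Schwarz for the
form `⟨·, B ·⟩` at `(aᵢ, u)` and at `(aᵢ, S u)` (recall `B S u = aᵢ`), combined with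
`‖S v - v‖ ≤ ε ‖v‖` on `V`, gives `1 - ε ≤ X²` and `Y² ≤ X² + ε Y`; together these force
`(1 - ε) Y ≤ X²`, according to whether `Y ≤ 1` or `Y ≥ 1`.
-/

section DotProduct

variable {ι R : Type*} [Fintype ι]

theorem sum_vecMulVec_self_mulVec [CommSemiring R] {κ : Type*} [Fintype κ] (a : κ → ι → R)
    (v : ι → R) : (∑ k, vecMulVec (a k) (a k)) *ᵥ v = ∑ k, (a k ⬝ᵥ v) • a k := by
  simp only [Matrix.sum_mulVec, vecMulVec_mulVec, op_smul_eq_smul]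

theorem Matrix.IsHermitian.dotProduct_mulVec_comm [CommSemiring R] [StarRing R] [TrivialStar R]
    {M : Matrix ι ι R} (hM : M.IsHermitian) (x y : ι → R) : x ⬝ᵥ M *ᵥ y = M *ᵥ x ⬝ᵥ y := by
  rw [dotProduct_mulVec, ← mulVec_transpose, (isHermitian_iff_isSymm.mp hM).eq, dotProduct_comm]

variable [CommRing R] [LinearOrder R] [IsStrictOrderedRing R]

theorem Matrix.PosSemidef.dotProduct_mulVec_mul_le [StarRing R] [TrivialStar R]
    {M : Matrix ι ι R} (hM : M.PosSemidef) (x y : ι → R) :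
    (x ⬝ᵥ M *ᵥ y) * (y ⬝ᵥ M *ᵥ x) ≤ (x ⬝ᵥ M *ᵥ x) * (y ⬝ᵥ M *ᵥ y) := by
  classical
  simpa only [toBilin'_apply'] using (toBilin' M).apply_mul_apply_le_of_forall_zero_le
    (fun z => by simpa only [toBilin'_apply', star_trivial] using hM.dotProduct_mulVec_nonneg z) x y

theorem dotProduct_self_nonneg (x : ι → R) : 0 ≤ x ⬝ᵥ x :=
  Finset.sum_nonneg fun i _ => mul_self_nonneg (x i)

theorem dotProduct_sq_le (x y : ι → R) : (x ⬝ᵥ y) ^ 2 ≤ (x ⬝ᵥ x) * (y ⬝ᵥ y) := by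
  simpa only [dotProduct, sq] using Finset.sum_mul_sq_le_sq_mul_sq Finset.univ x y

end DotProduct

theorem abs_dotProduct_le_sqrt_mul_sqrt {ι : Type*} [Fintype ι] (x y : ι → ℝ) :
    |x ⬝ᵥ y| ≤ √(x ⬝ᵥ x) * √(y ⬝ᵥ y) :=
  (Real.abs_le_sqrt (dotProduct_sq_le x y)).trans_eq
    (Real.sqrt_mul (dotProduct_self_nonneg x) _)

theorem Set.LeftInvOn.rightInvOn_of_mapsTo {K M : Type*} [DivisionRing K] [AddCommGroup M]
    [Module K M] {V : Submodule K M} [FiniteDimensional K V] {f g : M →ₗ[K] M}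
    (h : Set.LeftInvOn g f V) (hf : Set.MapsTo f V V) (hg : Set.MapsTo g V V) :
    Set.RightInvOn g f V := by
  have hgf : g.restrict hg * f.restrict hf = 1 := LinearMap.ext fun v => Subtype.ext (h v.2)
  intro v hv
  exact congrArg Subtype.val (LinearMap.congr_fun (mul_eq_one_comm.mp hgf) ⟨v, hv⟩)

theorem abs_dotProduct_mulVec_sub_le {ι : Type*} [Fintype ι] {S : Matrix ι ι ℝ} {ε : ℝ}
    {v : ι → ℝ} (h : √(∑ p, ((S *ᵥ v) p - v p) ^ 2) ≤ ε * √(∑ p, v p ^ 2)) (w : ι → ℝ) :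
    |w ⬝ᵥ S *ᵥ v - w ⬝ᵥ v| ≤ √(w ⬝ᵥ w) * (ε * √(v ⬝ᵥ v)) := by
  rw [← dotProduct_sub]
  refine (abs_dotProduct_le_sqrt_mul_sqrt _ _).trans
    (mul_le_mul_of_nonneg_left ?_ (Real.sqrt_nonneg _))
  simpa only [dotProduct, Pi.sub_apply, sq] using h

theorem one_sub_mul_dotProduct_le_dotProduct_mulVec {ι : Type*} [Fintype ι] {S : Matrix ι ι ℝ}
    {ε : ℝ} {v : ι → ℝ} (h : √(∑ p, ((S *ᵥ v) p - v p) ^ 2) ≤ ε * √(∑ p, v p ^ 2)) :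
    (1 - ε) * (v ⬝ᵥ v) ≤ v ⬝ᵥ S *ᵥ v := by
  have hv := (abs_le.mp (abs_dotProduct_mulVec_sub_le h v)).1
  rw [mul_left_comm, Real.mul_self_sqrt (dotProduct_self_nonneg v)] at hv
  linarith

theorem LinearIndependent.dotProduct_eq_ite_of_sum_smul_eq {ι κ K : Type*} [Fintype ι] [Fintype κ]
    [DecidableEq κ] [Field K] {a : κ → ι → K} (hli : LinearIndependent K a) {y : ι → K} {j : κ}
    (hy : ∑ k, (a k ⬝ᵥ y) • a k = a j) (k : κ) : a k ⬝ᵥ y = if k = j then 1 else 0 := by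
  refine Fintype.linearIndependent_iffₛ.mp hli (a · ⬝ᵥ y) (fun k => if k = j then 1 else 0) ?_ k
  simpa only [ite_smul, one_smul, zero_smul, Finset.sum_ite_eq', Finset.mem_univ, if_true] using hy

theorem one_sub_mul_le_of_le_of_sq_le {ε s t : ℝ} (hs : 0 ≤ s) (ht : 0 ≤ t) (h₁ : 1 - ε ≤ s)
    (h₂ : t ^ 2 ≤ s + ε * t) : (1 - ε) * t ≤ s := by
  rcases le_total t 1 with ht1 | ht1 <;> nlinarith

section Whitening

variable {ι : Type*} [Fintype ι] {ε : ℝ} {S B : Matrix ι ι ℝ} {α : ι → ℝ}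

theorem one_sub_le_sq_mulVec_dotProduct (hB : B.PosSemidef) (hunit : B *ᵥ α ⬝ᵥ B *ᵥ α = 1)
    (hSBB : S *ᵥ (B *ᵥ (B *ᵥ α)) = α)
    (hS : (1 - ε) * (B *ᵥ (B *ᵥ α) ⬝ᵥ B *ᵥ (B *ᵥ α)) ≤ B *ᵥ (B *ᵥ α) ⬝ᵥ S *ᵥ (B *ᵥ (B *ᵥ α))) :
    1 - ε ≤ (B *ᵥ α ⬝ᵥ α) ^ 2 := by
  set u := B *ᵥ α
  set y := B *ᵥ u
  have hsymm := hB.isHermitian.dotProduct_mulVec_comm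
  have hX : α ⬝ᵥ B *ᵥ α = u ⬝ᵥ α := hsymm α α
  have hαu : α ⬝ᵥ B *ᵥ u = 1 := (hsymm α u).trans hunit
  have hcs : (α ⬝ᵥ B *ᵥ u) * (u ⬝ᵥ u) ≤ (α ⬝ᵥ B *ᵥ α) * (u ⬝ᵥ y) :=
    hB.dotProduct_mulVec_mul_le α u
  rw [hαu, hunit, hX, one_mul] at hcs
  have hyy : (1 - ε) * (y ⬝ᵥ y) ≤ 1 := by rwa [hSBB, dotProduct_comm y α, hαu] at hS
  have huy : (u ⬝ᵥ y) ^ 2 ≤ y ⬝ᵥ y := by simpa only [hunit, one_mul] using dotProduct_sq_le u y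
  rcases le_total (1 - ε) 0 with hc | hc
  · exact hc.trans (sq_nonneg _)
  · have hsq : 1 ≤ ((u ⬝ᵥ α) * (u ⬝ᵥ y)) ^ 2 := by nlinarith
    calc 1 - ε ≤ (1 - ε) * ((u ⬝ᵥ α) * (u ⬝ᵥ y)) ^ 2 := le_mul_of_one_le_right hc hsq
      _ = (u ⬝ᵥ α) ^ 2 * ((1 - ε) * (u ⬝ᵥ y) ^ 2) := by ring
      _ ≤ (u ⬝ᵥ α) ^ 2 * 1 := by gcongr; nlinarith
      _ = (u ⬝ᵥ α) ^ 2 := mul_one _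

theorem sq_dotProduct_le_sq_mulVec_dotProduct_add (hB : B.PosSemidef)
    (hunit : B *ᵥ α ⬝ᵥ B *ᵥ α = 1) (hBSB : B *ᵥ (S *ᵥ (B *ᵥ α)) = α)
    (hnear : ∀ w, |w ⬝ᵥ S *ᵥ (B *ᵥ α) - w ⬝ᵥ B *ᵥ α| ≤
      √(w ⬝ᵥ w) * (ε * √(B *ᵥ α ⬝ᵥ B *ᵥ α))) :
    (α ⬝ᵥ α) ^ 2 ≤ (B *ᵥ α ⬝ᵥ α) ^ 2 + ε * (α ⬝ᵥ α) := by
  set u := B *ᵥ α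
  set w := S *ᵥ u
  have hsymm := hB.isHermitian.dotProduct_mulVec_comm
  have hX : α ⬝ᵥ B *ᵥ α = u ⬝ᵥ α := hsymm α α
  have hcs : (α ⬝ᵥ B *ᵥ w) * (w ⬝ᵥ B *ᵥ α) ≤ (α ⬝ᵥ B *ᵥ α) * (w ⬝ᵥ B *ᵥ w) :=
    hB.dotProduct_mulVec_mul_le α w
  rw [hsymm w α, hBSB, hX, dotProduct_comm w α] at hcs
  have hw := (abs_le.mp (hnear α)).2
  rw [hunit, Real.sqrt_one, mul_one, dotProduct_comm α u] at hw
  have hε : 0 ≤ ε := by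
    simpa only [hunit, Real.sqrt_one, mul_one, one_mul] using (abs_nonneg _).trans (hnear u)
  have hX0 : 0 ≤ u ⬝ᵥ α := by
    simpa only [star_trivial, hX] using hB.dotProduct_mulVec_nonneg α
  have hXY : (u ⬝ᵥ α) * √(α ⬝ᵥ α) ≤ α ⬝ᵥ α := by
    have hX2 : (u ⬝ᵥ α) ^ 2 ≤ α ⬝ᵥ α := by simpa only [hunit, one_mul] using dotProduct_sq_le u α
    calc (u ⬝ᵥ α) * √(α ⬝ᵥ α) ≤ √(α ⬝ᵥ α) * √(α ⬝ᵥ α) := by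
          gcongr; exact Real.le_sqrt_of_sq_le hX2
      _ = α ⬝ᵥ α := Real.mul_self_sqrt (dotProduct_self_nonneg α)
  calc (α ⬝ᵥ α) ^ 2 = (α ⬝ᵥ α) * (α ⬝ᵥ α) := sq _
    _ ≤ (u ⬝ᵥ α) * (α ⬝ᵥ w) := hcs
    _ ≤ (u ⬝ᵥ α) * (u ⬝ᵥ α + ε * √(α ⬝ᵥ α)) := by gcongr; linarith
    _ = (u ⬝ᵥ α) ^ 2 + ε * ((u ⬝ᵥ α) * √(α ⬝ᵥ α)) := by ring
    _ ≤ (u ⬝ᵥ α) ^ 2 + ε * (α ⬝ᵥ α) := by gcongr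

end Whitening

theorem whitening_orthonormalizes_general {d n : ℕ} (ε : ℝ)
    (a : Fin n → Fin d → ℝ) (hli : LinearIndependent ℝ a)
    (S : Matrix (Fin d) (Fin d) ℝ)
    (hSdef : S = ∑ i, Matrix.vecMulVec (a i) (a i))
    (hSnear : ∀ v : Fin d → ℝ, v ∈ Submodule.span ℝ (Set.range a) →
      Real.sqrt (∑ p, (S.mulVec v p - v p) ^ 2) ≤ ε * Real.sqrt (∑ p, v p ^ 2))
    -- `B` is the inverse square root of `S` on the span of the `aᵢ`:
    (B : Matrix (Fin d) (Fin d) ℝ) (hB : B.PosSemidef)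
    (hBV : ∀ v : Fin d → ℝ, v ∈ Submodule.span ℝ (Set.range a) →
      B.mulVec v ∈ Submodule.span ℝ (Set.range a))
    (hBinv : ∀ v : Fin d → ℝ, v ∈ Submodule.span ℝ (Set.range a) →
      (B * B * S).mulVec v = v) :
    (∀ i j, B.mulVec (a i) ⬝ᵥ B.mulVec (a j) = if i = j then (1 : ℝ) else 0) ∧
      ∀ i, (1 - ε) * (a i ⬝ᵥ a i) ≤ (B.mulVec (a i) ⬝ᵥ a i) ^ 2 := by
  set V := Submodule.span ℝ (Set.range a)
  have haV (i : Fin n) : a i ∈ V := Submodule.subset_span ⟨i, rfl⟩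
  have hSa (v : Fin d → ℝ) : S *ᵥ v = ∑ k, (a k ⬝ᵥ v) • a k := by
    rw [hSdef, sum_vecMulVec_self_mulVec]
  have hSV : Set.MapsTo (mulVecLin S) V V := fun v _ => by
    rw [mulVecLin_apply, hSa]
    exact V.sum_mem fun k _ => V.smul_mem _ (haV k)
  have hBV' : Set.MapsTo (mulVecLin B) V V := hBV
  have hBBS : Set.LeftInvOn (mulVecLin B ∘ₗ mulVecLin B) (mulVecLin S) V := fun v hv =>
    ((mulVec_mulVec _ _ _).trans (mulVec_mulVec _ _ _)).trans (hBinv v hv)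
  have hSBB := hBBS.rightInvOn_of_mapsTo hSV (hBV'.comp hBV')
  -- `hBBS` read as: `B` is a left inverse of `B S` on `V`
  have hBSB : Set.RightInvOn (mulVecLin B) (mulVecLin B ∘ₗ mulVecLin S) V :=
    Set.LeftInvOn.rightInvOn_of_mapsTo hBBS (hBV'.comp hSV) hBV'
  have horth (i j : Fin n) : B *ᵥ a i ⬝ᵥ B *ᵥ a j = if i = j then 1 else 0 := by
    rw [← hB.isHermitian.dotProduct_mulVec_comm]
    exact hli.dotProduct_eq_ite_of_sum_smul_eq ((hSa _).symm.trans (hSBB (haV j))) i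
  refine ⟨horth, fun i => ?_⟩
  have hunit : B *ᵥ a i ⬝ᵥ B *ᵥ a i = 1 := by simpa using horth i i
  exact one_sub_mul_le_of_le_of_sq_le (sq_nonneg _) (dotProduct_self_nonneg _)
    (one_sub_le_sq_mulVec_dotProduct hB hunit (hSBB (haV i))
      (one_sub_mul_dotProduct_le_dotProduct_mulVec (hSnear _ (hBV' (hBV' (haV i))))))
    (sq_dotProduct_le_sq_mulVec_dotProduct_add hB hunit (hBSB (haV i))
      (abs_dotProduct_mulVec_sub_le (hSnear _ (hBV' (haV i)))))

/-- Whitening: if `S = Σ aᵢaᵢᵀ` is `ε`-close to the identity on the span of the `aᵢ`,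
then the vectors `ãᵢ = S^{-1/2} aᵢ` are orthonormal and correlate with the `aᵢ`. -/
theorem whitening_orthonormalizes {d n : ℕ} (ε : ℝ) (hε : ε < 1)
    (a : Fin n → Fin d → ℝ) (hli : LinearIndependent ℝ a)
    (S : Matrix (Fin d) (Fin d) ℝ)
    (hSdef : S = ∑ i, Matrix.vecMulVec (a i) (a i))
    (hSnear : ∀ v : Fin d → ℝ, v ∈ Submodule.span ℝ (Set.range a) →
      Real.sqrt (∑ p, (S.mulVec v p - v p) ^ 2) ≤ ε * Real.sqrt (∑ p, v p ^ 2))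
    -- `B` is the inverse square root of `S` on the span of the `aᵢ`:
    (B : Matrix (Fin d) (Fin d) ℝ) (hB : B.PosSemidef)
    (hBV : ∀ v : Fin d → ℝ, v ∈ Submodule.span ℝ (Set.range a) →
      B.mulVec v ∈ Submodule.span ℝ (Set.range a))
    (hBinv : ∀ v : Fin d → ℝ, v ∈ Submodule.span ℝ (Set.range a) →
      (B * B * S).mulVec v = v) :
    (∀ i j, B.mulVec (a i) ⬝ᵥ B.mulVec (a j) = if i = j then (1 : ℝ) else 0) ∧
      ∀ i, (1 - ε) * (a i ⬝ᵥ a i) ≤ (B.mulVec (a i) ⬝ᵥ a i) ^ 2 :=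
  whitening_orthonormalizes_general ε a hli S hSdef hSnear B hB hBV hBinv
end

section
/- Let M = c·a aᵀ + N where a ∈ ℝⁿ is a unit vector, c > 0, ‖N‖ ≤ c/(1+β) for some β > 0, and ‖Na‖, ‖Nᵀa‖ ≤ εc, with 2ε(1+β)/β < 0.01. Then any top unit singular vector u of M (left or right, whichever achieves it) satisfies ⟨u, a⟩² ≥ 0.99. -/
open Matrix
open scoped Kronecker

/-!
A top singular pair `(u, w)` of `M` satisfies `M w = σ u` and `Mᵀ u = σ w` with `σ = ‖M‖`.
Write `s = ⟪a, u⟫`, `t = ⟪a, w⟫`. Since `N w = σ u - c t a` and projecting off `a` shortens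
vectors, `σ ‖u - s a‖ ≤ ‖N w‖ ≤ ‖N a‖ + ‖N‖ ‖w - t a‖`, and symmetrically with `Nᵀ`.
Adding the two bounds, `(σ - ‖N‖) (‖u - s a‖ + ‖w - t a‖) ≤ 2εc`, while testing `M` on `a` gives
`σ ≥ c - εc`, so that `σ - ‖N‖ ≥ c (β / (1 + β) - ε)` is a gap of order `cβ / (1 + β)`.
Hence `1 - s² = ‖u - s a‖²` is at most `0.01`.
-/

open scoped RealInnerProductSpace
open ContinuousLinearMap InnerProductSpace WithLp

theorem le_one_tenth_of_mul_le_add_mul {c ε β σ x y : ℝ} (hc : 0 < c) (hβ : 0 < β)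
    (hsmall : 2 * ε * (1 + β) / β < 0.01) (hσ : c - ε * c ≤ σ) (hy0 : 0 ≤ y)
    (hx : σ * x ≤ ε * c + c / (1 + β) * y) (hy : σ * y ≤ ε * c + c / (1 + β) * x) :
    x ≤ 0.1 := by
  set g := c * β / (1 + β) with hg_def
  have hg : 0 < g := by positivity
  have hδ : c / (1 + β) = c - g := by rw [hg_def]; field_simp; ring
  have hεg : 2 * ε * c < 0.01 * g := by
    have := mul_lt_mul_of_pos_right hsmall hg
    rwa [show 2 * ε * (1 + β) / β * g = 2 * ε * c by rw [hg_def]; field_simp] at this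
  have hgap : (σ - (c - g)) * (x + y) ≤ 2 * ε * c := by rw [← hδ]; linarith
  nlinarith

section InnerProductSpace

variable {E F : Type*} [NormedAddCommGroup E] [InnerProductSpace ℝ E]
  [NormedAddCommGroup F] [InnerProductSpace ℝ F]

theorem ContinuousLinearMap.apply_eq_opNorm_smul_of_inner_eq_opNorm (T : E →L[ℝ] F) {u : F}
    {w : E} (hu : ‖u‖ = 1) (hw : ‖w‖ = 1) (h : ⟪u, T w⟫ = ‖T‖) : T w = ‖T‖ • u := by
  have hTw : ‖T w‖ = ‖T‖ := by
    refine le_antisymm (by simpa [hw] using T.le_opNorm w) ?_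
    simpa [hu, ← h] using real_inner_le_norm u (T w)
  have := inner_eq_norm_mul_iff_real.mp (by rw [h, hu, hTw, one_mul] : ⟪u, T w⟫ = ‖u‖ * ‖T w‖)
  rwa [hu, one_smul, hTw, eq_comm] at this

theorem norm_sub_inner_smul_le {a : E} (ha : ‖a‖ = 1) (x : E) (k : ℝ) :
    ‖x - ⟪a, x⟫ • a‖ ≤ ‖x - k • a‖ := by
  have horth : ⟪x - ⟪a, x⟫ • a, (⟪a, x⟫ - k) • a⟫ = 0 := by
    simp [inner_sub_left, inner_smul_left, inner_smul_right, ha, real_inner_comm]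
  have hsplit : x - k • a = (x - ⟪a, x⟫ • a) + (⟪a, x⟫ - k) • a := by
    rw [sub_smul]; abel
  refine le_of_sq_le_sq ?_ (norm_nonneg _)
  rw [hsplit, norm_add_sq_real, horth]
  nlinarith [sq_nonneg ‖(⟪a, x⟫ - k) • a‖]

theorem norm_sub_inner_smul_sq {a u : E} (ha : ‖a‖ = 1) (hu : ‖u‖ = 1) :
    ‖u - ⟪a, u⟫ • a‖ ^ 2 = 1 - ⟪a, u⟫ ^ 2 := by
  rw [norm_sub_sq_real, inner_smul_right, norm_smul, mul_pow, ha, hu, real_inner_comm,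
    Real.norm_eq_abs, sq_abs]
  ring

theorem sub_norm_apply_le_opNorm_rankOne_add {a : E} (ha : ‖a‖ = 1) (c : ℝ) (N : E →L[ℝ] E) :
    c - ‖N a‖ ≤ ‖c • rankOne ℝ a a + N‖ := calc
  c - ‖N a‖ ≤ ‖c • a‖ - ‖N a‖ := by
    rw [norm_smul, ha, mul_one]; exact sub_le_sub_right (Real.le_norm_self c) _
  _ ≤ ‖c • a + N a‖ := norm_sub_le_norm_add _ _
  _ = ‖(c • rankOne ℝ a a + N) a‖ := by simp [ha]
  _ ≤ ‖c • rankOne ℝ a a + N‖ := by simpa [ha] using (c • rankOne ℝ a a + N).le_opNorm a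

theorem mul_norm_sub_inner_smul_le (N : E →L[ℝ] E) {a u w : E} {σ k : ℝ} (ha : ‖a‖ = 1)
    (hw : ‖w‖ ≤ 1) (hσ : 0 ≤ σ) (hNw : N w = σ • u - k • a) :
    σ * ‖u - ⟪a, u⟫ • a‖ ≤ ‖N a‖ + ‖N‖ * ‖w - ⟪a, w⟫ • a‖ := by
  have hcoef : ‖⟪a, w⟫ • N a‖ ≤ ‖N a‖ := by
    have : |⟪a, w⟫| ≤ 1 := (abs_real_inner_le_norm a w).trans (by rwa [ha, one_mul])
    rw [norm_smul, Real.norm_eq_abs]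
    exact mul_le_of_le_one_left (norm_nonneg _) this
  calc σ * ‖u - ⟪a, u⟫ • a‖ = ‖σ • u - ⟪a, σ • u⟫ • a‖ := by
        rw [inner_smul_right, mul_smul, ← smul_sub, norm_smul, Real.norm_of_nonneg hσ]
    _ ≤ ‖σ • u - k • a‖ := norm_sub_inner_smul_le ha _ _
    _ = ‖⟪a, w⟫ • N a + N (w - ⟪a, w⟫ • a)‖ := by
        rw [← hNw, map_sub, map_smul, add_sub_cancel]
    _ ≤ ‖N a‖ + ‖N‖ * ‖w - ⟪a, w⟫ • a‖ := norm_add_le_of_le hcoef (N.le_opNorm _)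

theorem inner_sq_ge_of_eq_rankOne_add [CompleteSpace E] {M N : E →L[ℝ] E} {a u w : E}
    {c ε β : ℝ} (hc : 0 < c) (hβ : 0 < β) (ha : ‖a‖ = 1) (hM : M = c • rankOne ℝ a a + N)
    (hN : ‖N‖ ≤ c / (1 + β)) (hNa : ‖N a‖ ≤ ε * c) (hNta : ‖adjoint N a‖ ≤ ε * c)
    (hsmall : 2 * ε * (1 + β) / β < 0.01) (hu : ‖u‖ = 1) (hw : ‖w‖ = 1)
    (htop : |⟪u, M w⟫| = ‖M‖) : 0.99 ≤ ⟪a, u⟫ ^ 2 := by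
  wlog hpos : ⟪u, M w⟫ = ‖M‖ generalizing u
  · have hneg : ⟪-u, M w⟫ = ‖M‖ := by
      rw [inner_neg_left, neg_eq_iff_eq_neg]
      exact ((abs_eq (norm_nonneg M)).mp htop).resolve_left hpos
    simpa using this (u := -u) (by rwa [norm_neg]) (by rw [hneg, abs_norm]) hneg
  have hMw : M w = ‖M‖ • u := M.apply_eq_opNorm_smul_of_inner_eq_opNorm hu hw hpos
  have hMtu : adjoint M u = ‖M‖ • w := by
    have := (adjoint M).apply_eq_opNorm_smul_of_inner_eq_opNorm hw hu
      (by rw [adjoint_inner_right, real_inner_comm, hpos, LinearIsometryEquiv.norm_map])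
    rwa [LinearIsometryEquiv.norm_map] at this
  have hσc : c - ε * c ≤ ‖M‖ := calc
    c - ε * c ≤ c - ‖N a‖ := sub_le_sub_left hNa c
    _ ≤ ‖M‖ := hM ▸ sub_norm_apply_le_opNorm_rankOne_add ha c N
  set σ := ‖M‖
  have hσ : 0 ≤ σ := norm_nonneg M
  have hNw : N w = σ • u - (c * ⟪a, w⟫) • a := by
    rw [← hMw, hM]; simp [mul_smul]
  have hNtu : adjoint N u = σ • w - (c * ⟪a, u⟫) • a := by
    rw [← hMtu, hM]; simp [mul_smul]
  set x := ‖u - ⟪a, u⟫ • a‖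
  set y := ‖w - ⟪a, w⟫ • a‖
  have hx : σ * x ≤ ε * c + c / (1 + β) * y :=
    (mul_norm_sub_inner_smul_le N ha hw.le hσ hNw).trans (add_le_add hNa
      (mul_le_mul_of_nonneg_right hN (norm_nonneg _)))
  have hy : σ * y ≤ ε * c + c / (1 + β) * x :=
    (mul_norm_sub_inner_smul_le (adjoint N) ha hu.le hσ hNtu).trans (add_le_add hNta
      (mul_le_mul_of_nonneg_right ((LinearIsometryEquiv.norm_map adjoint N).trans_le hN)
        (norm_nonneg _)))
  have hx2 : x ^ 2 = 1 - ⟪a, u⟫ ^ 2 := norm_sub_inner_smul_sq ha hu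
  have hx01 : x ≤ 0.1 :=
    le_one_tenth_of_mul_le_add_mul hc hβ hsmall hσc (norm_nonneg _) hx hy
  nlinarith [norm_nonneg (u - ⟪a, u⟫ • a)]

end InnerProductSpace

section Matrix

variable {ι : Type*} [Fintype ι]

theorem EuclideanSpace.norm_toLp_real (x : ι → ℝ) : ‖toLp 2 x‖ = √(∑ i, x i ^ 2) := by
  simp [EuclideanSpace.norm_eq]

theorem EuclideanSpace.norm_toLp_eq_one {x : ι → ℝ} (hx : x ⬝ᵥ x = 1) : ‖toLp 2 x‖ = 1 := by
  rw [norm_toLp_real, ← Real.sqrt_one, ← hx]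
  simp [dotProduct, sq]

variable [DecidableEq ι]

theorem Matrix.toEuclideanCLM_vecMulVec (x y : ι → ℝ) :
    toEuclideanCLM (𝕜 := ℝ) (vecMulVec x y) = rankOne ℝ (toLp 2 x) (toLp 2 y) := by
  ext1 v
  rw [← toLp_ofLp 2 v, toEuclideanCLM_toLp, vecMulVec_mulVec, op_smul_eq_smul, rankOne_apply,
    EuclideanSpace.inner_toLp_toLp, star_trivial, dotProduct_comm, toLp_smul]

theorem Matrix.toEuclideanCLM_transpose (A : Matrix ι ι ℝ) :
    toEuclideanCLM (𝕜 := ℝ) Aᵀ = adjoint (toEuclideanCLM (𝕜 := ℝ) A) := by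
  rw [← conjTranspose_eq_transpose_of_trivial, ← star_eq_conjTranspose, map_star]
  rfl

end Matrix

/-- If `M = c aaᵀ + N` with `‖N‖ ≤ c/(1+β)` and `‖Na‖, ‖Nᵀa‖ ≤ εc`, with
`2ε(1+β)/β < 0.01`, then a top singular vector of `M` is `0.99`-correlated with `a`. -/
theorem top_singular_vector_correlates {n : ℕ}
    (M N : Matrix (Fin n) (Fin n) ℝ) (a : Fin n → ℝ) (c ε β : ℝ)
    (hc : 0 < c) (hβ : 0 < β) (ha : a ⬝ᵥ a = 1)
    (hM : M = c • Matrix.vecMulVec a a + N)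
    (hN : specNorm N ≤ c / (1 + β))
    (hNa : Real.sqrt (∑ i, (N.mulVec a) i ^ 2) ≤ ε * c)
    (hNta : Real.sqrt (∑ i, (Matrix.vecMul a N) i ^ 2) ≤ ε * c)
    (hsmall : 2 * ε * (1 + β) / β < 0.01)
    (u w : Fin n → ℝ) (hu : u ⬝ᵥ u = 1) (hw : w ⬝ᵥ w = 1)
    (htop : |u ⬝ᵥ M.mulVec w| = specNorm M) :
    (0.99 : ℝ) ≤ (u ⬝ᵥ a) ^ 2 ∨ (0.99 : ℝ) ≤ (w ⬝ᵥ a) ^ 2 := by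
  left
  refine inner_sq_ge_of_eq_rankOne_add (M := toEuclideanCLM (𝕜 := ℝ) M)
    (N := toEuclideanCLM (𝕜 := ℝ) N) hc hβ (EuclideanSpace.norm_toLp_eq_one ha) ?_ hN ?_ ?_
    hsmall (EuclideanSpace.norm_toLp_eq_one hu) (EuclideanSpace.norm_toLp_eq_one hw) ?_
  · rw [hM, map_add, map_smul, toEuclideanCLM_vecMulVec]
  · rwa [toEuclideanCLM_toLp, EuclideanSpace.norm_toLp_real]
  · rwa [← toEuclideanCLM_transpose, toEuclideanCLM_toLp, EuclideanSpace.norm_toLp_real,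
      mulVec_transpose]
  · rwa [inner_toEuclideanCLM]
end

section
/- Let M = c·a aᵀ + Σ_{i>1} cᵢ aᵢaᵢᵀ + N where a = a₁,…,aₙ ∈ ℝ^d are orthonormal, c ≥ 1 - η with η ≤ 0.01, 0 ≤ cᵢ ≤ η for i > 1, and ‖N‖ ≤ ε. Then for any 2η < 1 - 2η, taking κ with 2η ≤ κ ≤ 1-2η, one has ‖M - κ a aᵀ‖ ≤ ‖M‖ - κ + 2ε; consequently the top unit eigenvector u of M satisfies ⟨u, a⟩² ≥ 1 - 2ε/κ. -/
/-!
Write `P = a aᵀ` for the distinguished direction `a = a i0`. On the orthonormal family,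
`M - κ P - N` acts diagonally with coefficients `c - κ` and `cᵢ ∈ [0, η]`, all at most `c - κ`
in absolute value because `η ≤ c - κ`; Bessel's inequality turns this into
`‖M - κ P‖ ≤ c - κ + ε`. Testing `M` on `a`, where the remaining positive semidefinite part only
helps, gives `‖M‖ ≥ c - ε`, which yields the first claim. For the second, the Rayleigh quotient
of `M - κ P` at a top unit eigenvector `u` is `μ - κ ⟨u, a⟩²`, and comparing it with the first
claim forces `κ (1 - ⟨u, a⟩²) ≤ 2ε`.
-/

open Matrix
open scoped Kronecker

open scoped Matrix.Norms.L2Operator RealInnerProductSpace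
open InnerProductSpace WithLp

theorem specNorm_eq_l2_opNorm {m n : Type*} [Fintype m] [Fintype n] [DecidableEq n]
    (A : Matrix m n ℝ) : specNorm A = ‖A‖ := rfl

theorem Orthonormal.norm_sum_smul_rankOne_self_le {E ι : Type*} [NormedAddCommGroup E]
    [InnerProductSpace ℝ E] [Fintype ι] {v : ι → E} (hv : Orthonormal ℝ v) {b : ι → ℝ} {C : ℝ}
    (hC : 0 ≤ C) (hb : ∀ i, |b i| ≤ C) :
    ‖∑ i, b i • rankOne ℝ (v i) (v i)‖ ≤ C := by
  refine ContinuousLinearMap.opNorm_le_bound _ hC fun x => ?_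
  have happly : (∑ i, b i • rankOne ℝ (v i) (v i)) x = ∑ i, (b i * ⟪v i, x⟫) • v i := by
    simp [smul_smul]
  have hsq : ‖∑ i, (b i * ⟪v i, x⟫) • v i‖ ^ 2 = ∑ i, b i ^ 2 * ⟪v i, x⟫ ^ 2 := by
    rw [← real_inner_self_eq_norm_sq, hv.inner_sum]
    simp [sq, mul_mul_mul_comm]
  have hbessel : ∑ i, ⟪v i, x⟫ ^ 2 ≤ ‖x‖ ^ 2 := by
    simpa using hv.sum_inner_products_le (s := Finset.univ) x
  rw [happly]
  refine le_of_pow_le_pow_left₀ two_ne_zero (by positivity) ?_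
  calc ‖∑ i, (b i * ⟪v i, x⟫) • v i‖ ^ 2 = ∑ i, b i ^ 2 * ⟪v i, x⟫ ^ 2 := hsq
    _ ≤ ∑ i, C ^ 2 * ⟪v i, x⟫ ^ 2 := by
        refine Finset.sum_le_sum fun i _ => mul_le_mul_of_nonneg_right ?_ (sq_nonneg _)
        exact sq_le_sq' (abs_le.mp (hb i)).1 (abs_le.mp (hb i)).2
    _ ≤ (C * ‖x‖) ^ 2 := by
        rw [← Finset.mul_sum, mul_pow]
        gcongr

theorem EuclideanSpace.orthonormal_toLp_iff {n ι : Type*} [Fintype n] [DecidableEq ι]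
    {a : ι → n → ℝ} :
    Orthonormal ℝ (fun i => toLp 2 (a i)) ↔ ∀ i j, a i ⬝ᵥ a j = if i = j then 1 else 0 := by
  rw [orthonormal_iff_ite]
  simp only [EuclideanSpace.inner_toLp_toLp, star_trivial]
  exact ⟨fun h i j => (h j i).trans (if_congr eq_comm rfl rfl),
    fun h i j => (h j i).trans (if_congr eq_comm rfl rfl)⟩

namespace Matrix

variable {n : Type*} [Fintype n]

theorem dotProduct_vecMulVec_self_mulVec (x y : n → ℝ) :
    x ⬝ᵥ vecMulVec y y *ᵥ x = (y ⬝ᵥ x) ^ 2 := by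
  rw [vecMulVec_mulVec]
  simp [sq, dotProduct_comm x y]

variable [DecidableEq n]

theorem toEuclideanCLM_vecMulVec_self (x : n → ℝ) :
    toEuclideanCLM (𝕜 := ℝ) (vecMulVec x x) = rankOne ℝ (toLp 2 x) (toLp 2 x) := by
  ext y i
  simp [vecMulVec_mulVec, EuclideanSpace.inner_eq_star_dotProduct, mul_comm, dotProduct_comm]

theorem abs_dotProduct_mulVec_le_l2_opNorm (A : Matrix n n ℝ) {x : n → ℝ} (hx : x ⬝ᵥ x = 1) :
    |x ⬝ᵥ A *ᵥ x| ≤ ‖A‖ := by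
  have hnorm : ‖toLp 2 x‖ = 1 := by
    rw [← pow_eq_one_iff_of_nonneg (norm_nonneg _) two_ne_zero, ← real_inner_self_eq_norm_sq,
      EuclideanSpace.inner_toLp_toLp, star_trivial, hx]
  calc |x ⬝ᵥ A *ᵥ x| = |⟪toLp 2 x, toEuclideanCLM (𝕜 := ℝ) A (toLp 2 x)⟫| := by
        rw [inner_toEuclideanCLM]
    _ ≤ ‖toLp 2 x‖ * ‖toEuclideanCLM (𝕜 := ℝ) A (toLp 2 x)‖ := abs_real_inner_le_norm _ _
    _ ≤ ‖toLp 2 x‖ * (‖A‖ * ‖toLp 2 x‖) := by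
        gcongr
        exact (toEuclideanCLM (𝕜 := ℝ) A).le_opNorm _
    _ = ‖A‖ := by rw [hnorm, one_mul, mul_one]

theorem l2_opNorm_sum_smul_vecMulVec_self_le {ι : Type*} [Fintype ι] {a : ι → n → ℝ}
    (ha : Orthonormal ℝ (fun i => toLp 2 (a i))) {b : ι → ℝ} {C : ℝ} (hC : 0 ≤ C)
    (hb : ∀ i, |b i| ≤ C) :
    ‖∑ i, b i • vecMulVec (a i) (a i)‖ ≤ C := by
  rw [← l2_opNorm_toEuclideanCLM, map_sum]
  simp only [map_smul, toEuclideanCLM_vecMulVec_self]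
  exact ha.norm_sum_smul_rankOne_self_le hC hb

theorem l2_opNorm_smul_vecMulVec_add_sum_ne_le {ι : Type*} [Fintype ι] [DecidableEq ι]
    {a : ι → n → ℝ} (ha : Orthonormal ℝ (fun i => toLp 2 (a i))) (j : ι) {t C : ℝ} {b : ι → ℝ}
    (ht : |t| ≤ C) (hb : ∀ i, i ≠ j → |b i| ≤ C) :
    ‖t • vecMulVec (a j) (a j) +
      ∑ i ∈ Finset.univ.filter (· ≠ j), b i • vecMulVec (a i) (a i)‖ ≤ C := by
  have hsum : ∑ i, Function.update b j t i • vecMulVec (a i) (a i) =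
      t • vecMulVec (a j) (a j) +
        ∑ i ∈ Finset.univ.filter (· ≠ j), b i • vecMulVec (a i) (a i) := by
    rw [Finset.filter_ne', ← Finset.add_sum_erase _ _ (Finset.mem_univ j), Function.update_self]
    exact congrArg _ <| Finset.sum_congr rfl fun i hi => by
      rw [Function.update_of_ne (Finset.ne_of_mem_erase hi)]
  rw [← hsum]
  refine l2_opNorm_sum_smul_vecMulVec_self_le ha ((abs_nonneg t).trans ht) fun i => ?_
  rcases eq_or_ne i j with rfl | hi
  · rwa [Function.update_self]
  · rw [Function.update_of_ne hi]
    exact hb i hi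

theorem sub_l2_opNorm_le_l2_opNorm_smul_vecMulVec_add {R N : Matrix n n ℝ} {x : n → ℝ}
    (hx : x ⬝ᵥ x = 1) (hR : R.PosSemidef) (c : ℝ) :
    c - ‖N‖ ≤ ‖c • vecMulVec x x + R + N‖ := by
  have hq : x ⬝ᵥ (c • vecMulVec x x + R + N) *ᵥ x = c + x ⬝ᵥ R *ᵥ x + x ⬝ᵥ N *ᵥ x := by
    rw [add_mulVec, add_mulVec, dotProduct_add, dotProduct_add, smul_mulVec, dotProduct_smul,
      dotProduct_vecMulVec_self_mulVec, hx, one_pow, smul_eq_mul, mul_one]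
  have hRq : 0 ≤ x ⬝ᵥ R *ᵥ x := by simpa using hR.dotProduct_mulVec_nonneg x
  have hNq := abs_le.mp (abs_dotProduct_mulVec_le_l2_opNorm N hx)
  have hMq := abs_le.mp (abs_dotProduct_mulVec_le_l2_opNorm (c • vecMulVec x x + R + N) hx)
  rw [hq] at hMq
  linarith

theorem one_sub_div_le_sq_dotProduct_of_l2_opNorm_sub_le {M : Matrix n n ℝ} {a u : n → ℝ}
    {μ κ δ : ℝ} (hκ : 0 < κ) (hu : u ⬝ᵥ u = 1) (hMu : M *ᵥ u = μ • u) (hμ : |μ| = ‖M‖)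
    (hgap : ‖M - κ • vecMulVec a a‖ ≤ ‖M‖ - κ + δ) :
    1 - δ / κ ≤ (u ⬝ᵥ a) ^ 2 := by
  have hq : u ⬝ᵥ (M - κ • vecMulVec a a) *ᵥ u = μ - κ * (u ⬝ᵥ a) ^ 2 := by
    rw [sub_mulVec, smul_mulVec, dotProduct_sub, dotProduct_smul, hMu, dotProduct_smul, hu,
      dotProduct_vecMulVec_self_mulVec, dotProduct_comm a u, smul_eq_mul, smul_eq_mul, mul_one]
  have hrayleigh := (abs_dotProduct_mulVec_le_l2_opNorm _ hu).trans hgap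
  rw [hq, ← hμ] at hrayleigh
  have ht : 0 ≤ κ * (u ⬝ᵥ a) ^ 2 := by positivity
  rw [sub_le_comm, le_div_iff₀ hκ]
  rcases abs_cases μ with ⟨hμabs, -⟩ | ⟨hμabs, -⟩ <;>
    rw [hμabs] at hrayleigh <;> linarith [abs_le.mp hrayleigh]

end Matrix

theorem top_eigenvector_correlates_general {d n : ℕ}
    (a : Fin n → Fin d → ℝ) (i0 : Fin n)
    (ha : ∀ i j, a i ⬝ᵥ a j = if i = j then (1 : ℝ) else 0)
    (c η ε κ : ℝ) (co : Fin n → ℝ)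
    (hη0 : 0 ≤ η) (hc : 1 - η ≤ c)
    (hco : ∀ i, i ≠ i0 → 0 ≤ co i ∧ co i ≤ η)
    (N M : Matrix (Fin d) (Fin d) ℝ) (hN : specNorm N ≤ ε)
    (hM : M = c • Matrix.vecMulVec (a i0) (a i0) +
      (∑ i ∈ Finset.univ.filter (fun i => i ≠ i0),
        co i • Matrix.vecMulVec (a i) (a i)) + N)
    (hκ0 : 0 < κ) (hκ2 : κ ≤ 1 - 2 * η) :
    specNorm (M - κ • Matrix.vecMulVec (a i0) (a i0)) ≤ specNorm M - κ + 2 * ε ∧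
      ∀ (u : Fin d → ℝ) (μ : ℝ), u ⬝ᵥ u = 1 → M.mulVec u = μ • u →
        |μ| = specNorm M → 1 - 2 * ε / κ ≤ (u ⬝ᵥ a i0) ^ 2 := by
  simp only [specNorm_eq_l2_opNorm] at hN ⊢
  set P := vecMulVec (a i0) (a i0)
  set R := ∑ i ∈ Finset.univ.filter (· ≠ i0), co i • vecMulVec (a i) (a i)
  have hlower : c - ε ≤ ‖M‖ := by
    have hR : R.PosSemidef := posSemidef_sum _ fun i hi =>
      (posSemidef_vecMulVec_self_star (a i)).smul (hco i (Finset.mem_filter.mp hi).2).1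
    have := sub_l2_opNorm_le_l2_opNorm_smul_vecMulVec_add (N := N) (by simpa using ha i0 i0) hR c
    rw [hM]
    linarith
  have hupper : ‖M - κ • P‖ ≤ c - κ + ε := by
    have hsplit : M - κ • P = ((c - κ) • P + R) + N := by
      rw [hM, sub_smul]
      abel
    rw [hsplit]
    refine (norm_add_le _ _).trans (add_le_add ?_ hN)
    refine l2_opNorm_smul_vecMulVec_add_sum_ne_le (EuclideanSpace.orthonormal_toLp_iff.mpr ha) i0
      (abs_of_nonneg (by linarith)).le fun i hi => ?_
    rw [abs_of_nonneg (hco i hi).1]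
    linarith [(hco i hi).2]
  have hgap : ‖M - κ • P‖ ≤ ‖M‖ - κ + 2 * ε := by linarith
  exact ⟨hgap, fun u μ hu hMu hμ =>
    one_sub_div_le_sq_dotProduct_of_l2_opNorm_sub_le hκ0 hu hMu hμ hgap⟩

/-- For `M = c a₀a₀ᵀ + Σ_{i≠0} cᵢ aᵢaᵢᵀ + N` with `c ≥ 1 - η`, `0 ≤ cᵢ ≤ η ≤ 0.01` and
`‖N‖ ≤ ε`: for `2η ≤ κ ≤ 1 - 2η` one has `‖M - κ a₀a₀ᵀ‖ ≤ ‖M‖ - κ + 2ε`, and the top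
eigenvector `u` of `M` satisfies `⟨u,a₀⟩² ≥ 1 - 2ε/κ`. -/
theorem top_eigenvector_correlates {d n : ℕ}
    (a : Fin n → Fin d → ℝ) (i0 : Fin n)
    (ha : ∀ i j, a i ⬝ᵥ a j = if i = j then (1 : ℝ) else 0)
    (c η ε κ : ℝ) (co : Fin n → ℝ)
    (hη0 : 0 ≤ η) (hη : η ≤ 0.01) (hc : 1 - η ≤ c)
    (hco : ∀ i, i ≠ i0 → 0 ≤ co i ∧ co i ≤ η)
    (N M : Matrix (Fin d) (Fin d) ℝ) (hNsym : N.IsSymm) (hN : specNorm N ≤ ε)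
    (hM : M = c • Matrix.vecMulVec (a i0) (a i0) +
      (∑ i ∈ Finset.univ.filter (fun i => i ≠ i0),
        co i • Matrix.vecMulVec (a i) (a i)) + N)
    (hκ0 : 0 < κ) (hκ1 : 2 * η ≤ κ) (hκ2 : κ ≤ 1 - 2 * η) :
    specNorm (M - κ • Matrix.vecMulVec (a i0) (a i0)) ≤ specNorm M - κ + 2 * ε ∧
      ∀ (u : Fin d → ℝ) (μ : ℝ), u ⬝ᵥ u = 1 → M.mulVec u = μ • u →
        |μ| = specNorm M → 1 - 2 * ε / κ ≤ (u ⬝ᵥ a i0) ^ 2 :=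
  top_eigenvector_correlates_general a i0 ha c η ε κ co hη0 hc hco N M hN hM hκ0 hκ2
end
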